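/- Let φ: G → T be a finite harmonic morphism from a connected loopless graph G to a tree T. Then: (i) for every refinement T' of T there exists a refinement φ': G' → T' of φ; and (ii) for every refinement H of G there exists a refinement φ': G' → T' of φ such that G' is a refinement of H. In both cases deg φ' = deg φ. -/

import Mathlib

/-!  Finite multigraphs, harmonic morphisms, refinements and stable gonality,
     following Cornelissen–Kato–Kool, "A combinatorial Li–Yau inequality and
     rational points on curves".  -/

attribute [local instance] Classical.propDecidable

noncomputable section

/-- A finite multigraph: a finite vertex type, a finite edge type, and for each
edge its two (possibly equal) endpoints. -/
structure MGraph where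
  V : Type
  E : Type
  [vFin : Fintype V]
  [eFin : Fintype E]
  fst : E → V
  snd : E → V

attribute [instance] MGraph.vFin MGraph.eFin

namespace MGraph

variable (G : MGraph)

/-- The edge `e` is incident to the vertex `v`. -/
def Inc (e : G.E) (v : G.V) : Prop := G.fst e = v ∨ G.snd e = v

/-- The edge `e` joins the vertices `x` and `y` (unordered). -/
def Joins (e : G.E) (x y : G.V) : Prop :=
  (G.fst e = x ∧ G.snd e = y) ∨ (G.fst e = y ∧ G.snd e = x)

/-- Two vertices are adjacent if some edge joins them. -/
def Adj (x y : G.V) : Prop := ∃ e, G.Joins e x y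

/-- A multigraph is connected if it is nonempty and any two vertices are joined
by a walk. -/
def Connected : Prop := Nonempty G.V ∧ ∀ x y : G.V, Relation.ReflTransGen G.Adj x y

/-- No loops. -/
def Loopless : Prop := ∀ e : G.E, G.fst e ≠ G.snd e

/-- A simple graph: no loops and no multiple edges. -/
def Simple : Prop :=
  G.Loopless ∧ ∀ e e' : G.E, G.Joins e' (G.fst e) (G.snd e) → e = e'

/-- A tree is a connected graph of genus `|E| - |V| + 1 = 0`. -/
def IsTree : Prop := G.Connected ∧ Fintype.card G.V = Fintype.card G.E + 1

/-- The degree of a vertex (loops count twice). -/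
def degree (v : G.V) : ℕ :=
  (Finset.univ.filter fun e => G.fst e = v).card +
    (Finset.univ.filter fun e => G.snd e = v).card

/-- The maximal vertex degree `Δ_G`. -/
def maxDegree : ℕ := Finset.univ.sup G.degree

/-- The volume `vol(G) = Σ_v deg v = 2 |E|`. -/
def vol : ℕ := ∑ v, G.degree v

/-- The number of edges joining `x` and `y`. -/
def numEdges (x y : G.V) : ℕ := (Finset.univ.filter fun e => G.Joins e x y).card

/-- The Laplacian matrix `L_G = D_G - A_G`. -/
def lapMatrix : Matrix G.V G.V ℝ := fun x y =>
  (if x = y then (G.degree x : ℝ) else 0) - (G.numEdges x y : ℝ)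

/-- `lam` is the smallest nonzero eigenvalue `λ_G` of the Laplacian of `G`. -/
def IsFirstLapEigenvalue (lam : ℝ) : Prop :=
  IsLeast {μ : ℝ | μ ≠ 0 ∧ ∃ f : G.V → ℝ, f ≠ 0 ∧ G.lapMatrix.mulVec f = μ • f} lam

/-- The normalized Laplacian `D^{-1/2} L D^{-1/2}`. -/
def normLapMatrix : Matrix G.V G.V ℝ := fun x y =>
  G.lapMatrix x y / (Real.sqrt (G.degree x) * Real.sqrt (G.degree y))

/-- `lam` is the smallest nonzero eigenvalue of the normalized Laplacian of `G`. -/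
def IsFirstNormLapEigenvalue (lam : ℝ) : Prop :=
  IsLeast {μ : ℝ | μ ≠ 0 ∧ ∃ f : G.V → ℝ, f ≠ 0 ∧ G.normLapMatrix.mulVec f = μ • f} lam

/-- Reachability by walks staying inside the vertex set `S`. -/
def ReachIn (S : Set G.V) (x y : G.V) : Prop :=
  Relation.ReflTransGen (fun a b => a ∈ S ∧ b ∈ S ∧ G.Adj a b) x y

/-- Reachability by walks not using the edge `e₀`. -/
def ReachAvoidEdge (e₀ : G.E) (x y : G.V) : Prop :=
  Relation.ReflTransGen (fun a b => ∃ e, e ≠ e₀ ∧ G.Joins e a b) x y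

/-- The connected component of `G - e` containing the vertex `v`. -/
def edgeSide (e : G.E) (v : G.V) : Set G.V := {y | G.ReachAvoidEdge e v y}

/-- The connected component of `G - x` containing the vertex `y`. -/
def vertexSide (x y : G.V) : Set G.V := {z | G.ReachIn {v | v ≠ x} y z}

end MGraph

/-- The mass `ν(S)` of a set of vertices. -/
def mass {V : Type} [Fintype V] (ν : V → ℝ) (S : Set V) : ℝ :=
  ∑ v ∈ Finset.univ.filter (fun v => v ∈ S), ν v

/-- A probability measure on a finite vertex set. -/
def IsProbMeasure {V : Type} [Fintype V] (ν : V → ℝ) : Prop :=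
  (∀ v, 0 ≤ ν v) ∧ ∑ v, ν v = 1

namespace MGraph

/-- The size of an edge `e` of a measured tree `(T, ν)`:
`min(ν(T₁(e)), ν(T₂(e)))`. -/
def edgeSize (G : MGraph) (ν : G.V → ℝ) (e : G.E) : ℝ :=
  min (mass ν (G.edgeSide e (G.fst e))) (mass ν (G.edgeSide e (G.snd e)))

/-- `(T, ν)` is `c`-thick: for every vertex `x`, `T - x` has a connected
component of measure at least `c`. -/
def Thick (G : MGraph) (ν : G.V → ℝ) (c : ℝ) : Prop :=
  ∀ x : G.V, ∃ y : G.V, y ≠ x ∧ c ≤ mass ν (G.vertexSide x y)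

/-- Subdivision of the edge `e₀`: a new vertex in the middle of `e₀`,
and `e₀` replaced by two new edges. -/
def subdivide (G : MGraph) (e₀ : G.E) : MGraph where
  V := G.V ⊕ Unit
  E := {e : G.E // e ≠ e₀} ⊕ Bool
  vFin := inferInstance
  eFin := inferInstance
  fst := fun e => match e with
    | Sum.inl e1 => Sum.inl (G.fst e1.1)
    | Sum.inr false => Sum.inl (G.fst e₀)
    | Sum.inr true => Sum.inr ()
  snd := fun e => match e with
    | Sum.inl e1 => Sum.inl (G.snd e1.1)
    | Sum.inr false => Sum.inr ()
    | Sum.inr true => Sum.inl (G.snd e₀)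

/-- Addition of a leaf at the vertex `v₀`: one new vertex, joined to `v₀` by
one new edge. -/
def addLeaf (G : MGraph) (v₀ : G.V) : MGraph where
  V := G.V ⊕ Unit
  E := G.E ⊕ Unit
  vFin := inferInstance
  eFin := inferInstance
  fst := Sum.elim (fun e => Sum.inl (G.fst e)) (fun _ => Sum.inl v₀)
  snd := Sum.elim (fun e => Sum.inl (G.snd e)) (fun _ => Sum.inr ())

/-- An isomorphism of multigraphs. -/
structure Iso (G H : MGraph) where
  eV : G.V ≃ H.V
  eE : G.E ≃ H.E
  ends : ∀ e, H.Joins (eE e) (eV (G.fst e)) (eV (G.snd e))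

/-- `Refines G G' ι p` means: `G'` is a refinement of `G` (obtained from `G`
by finitely many subdivisions of edges and additions of leaves, up to
isomorphism).  The map `ι` identifies the vertices of `G` inside `G'` and the
"provenance" map `p` records, for every edge of `G'`, the edge of `G` it lies
over (`none` for edges of added leaf-trees). -/
inductive Refines : ∀ (G G' : MGraph), (G.V → G'.V) → (G'.E → Option G.E) → Prop
  | refl (G : MGraph) : Refines G G id (fun e => some e)
  | subdiv {G G' : MGraph} {ι : G.V → G'.V} {p : G'.E → Option G.E}
      (h : Refines G G' ι p) (e₀ : G'.E) :
      Refines G (subdivide G' e₀) (fun v => Sum.inl (ι v))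
        (fun e => Sum.elim (fun e1 : {e : G'.E // e ≠ e₀} => p e1.1) (fun _ : Bool => p e₀) e)
  | leaf {G G' : MGraph} {ι : G.V → G'.V} {p : G'.E → Option G.E}
      (h : Refines G G' ι p) (v₀ : G'.V) :
      Refines G (addLeaf G' v₀) (fun v => Sum.inl (ι v))
        (fun e => Sum.elim (fun e1 : G'.E => p e1) (fun _ : Unit => none) e)
  | iso {G G' : MGraph} {ι : G.V → G'.V} {p : G'.E → Option G.E}
      (h : Refines G G' ι p) {G'' : MGraph} (φ : Iso G' G'') :
      Refines G G'' (fun v => φ.eV (ι v)) (fun e => p (φ.eE.symm e))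

/-- `Subdivides G G' ι`: `G'` is obtained from `G` by subdividing edges only
(no leaves added), up to isomorphism. -/
inductive Subdivides : ∀ (G G' : MGraph), (G.V → G'.V) → Prop
  | refl (G : MGraph) : Subdivides G G id
  | subdiv {G G' : MGraph} {ι : G.V → G'.V}
      (h : Subdivides G G' ι) (e₀ : G'.E) :
      Subdivides G (subdivide G' e₀) (fun v => Sum.inl (ι v))
  | iso {G G' : MGraph} {ι : G.V → G'.V}
      (h : Subdivides G G' ι) {G'' : MGraph} (φ : Iso G' G'') :
      Subdivides G G'' (fun v => φ.eV (ι v))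

/-- A finite harmonic (indexed) morphism of multigraphs: vertices map to
vertices, edges to edges (compatibly with endpoints), each edge `e` carries a
positive index `r e`, and around each vertex `v` the sums
`Σ_{e ∋ v, fE e = e'} r e` have a common value `m v > 0` for all edges `e'`
incident to the image of `v`. -/
structure FinHarm (G T : MGraph) where
  fV : G.V → T.V
  fE : G.E → T.E
  r : G.E → ℕ
  r_pos : ∀ e, 0 < r e
  ends : ∀ e, T.Joins (fE e) (fV (G.fst e)) (fV (G.snd e))
  m : G.V → ℕ
  m_pos : ∀ v, 0 < m v
  harm : ∀ v : G.V, ∀ e' : T.E, T.Inc e' (fV v) →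
    m v = ∑ e ∈ Finset.univ.filter (fun e => G.Inc e v ∧ fE e = e'), r e

/-- `φ` has degree `d`: over every vertex the `m`'s sum to `d` and over every
edge the indices sum to `d`. -/
def FinHarm.IsDegree {G T : MGraph} (φ : FinHarm G T) (d : ℕ) : Prop :=
  (∀ v' : T.V, ∑ v ∈ Finset.univ.filter (fun v => φ.fV v = v'), φ.m v = d) ∧
  (∀ e' : T.E, ∑ e ∈ Finset.univ.filter (fun e => φ.fE e = e'), φ.r e = d)

/-- The set of degrees of finite harmonic morphisms from refinements of `G` to
trees; the stable gonality `sgon(G)` is the least element of this set. -/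
def sgonSet (G : MGraph) : Set ℕ :=
  {d | ∃ (G' T : MGraph) (ι : G.V → G'.V) (p : G'.E → Option G.E),
        Refines G G' ι p ∧ G'.Loopless ∧ T.IsTree ∧
        ∃ φ : FinHarm G' T, φ.IsDegree d}

/-- `|φ⁻¹(S) ∩ V(G)|` for `S ⊆ V(T)`, `G'` a refinement of `G` via `ι`,
and `φ : G' → T`. -/
def pushCount {G G' T : MGraph} (ι : G.V → G'.V) (φ : FinHarm G' T) (S : Set T.V) : ℕ :=
  (Finset.univ.filter (fun v : G.V => φ.fV (ι v) ∈ S)).card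

/-- The pushforward measure `φ_* μ_G (S) = |φ⁻¹(S) ∩ V(G)| / |G|`. -/
def pushMeasure {G G' T : MGraph} (ι : G.V → G'.V) (φ : FinHarm G' T) (S : Set T.V) : ℝ :=
  (pushCount ι φ S : ℝ) / (Fintype.card G.V : ℝ)

/-- The size of an edge `e` of `T` with respect to the pushforward measure
`φ_* μ_G`. -/
def pushEdgeSize {G G' T : MGraph} (ι : G.V → G'.V) (φ : FinHarm G' T) (e : T.E) : ℝ :=
  min (pushMeasure ι φ (T.edgeSide e (T.fst e))) (pushMeasure ι φ (T.edgeSide e (T.snd e)))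

/-- The measured tree `(T, φ_* μ_G)` is `c`-thick. -/
def PushThick {G G' T : MGraph} (ι : G.V → G'.V) (φ : FinHarm G' T) (c : ℝ) : Prop :=
  ∀ x : T.V, ∃ y : T.V, y ≠ x ∧ c ≤ pushMeasure ι φ (T.vertexSide x y)

end MGraph

open MGraph

namespace MGraph

/-- `φ' : G' → T'` is a refinement of the finite harmonic morphism
`φ : G → T`, where `G'` refines `G` via `(ιG, pG)` and `T'` refines `T` via
`(ιT, pT)`: (1) `φ'` agrees with `φ` on the original vertices; (2) the
refinement of each edge `[e]` of `G` is mapped onto the refinement of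
`[φ(e)]`; (3) the indices along the refinement of `e` all equal `r_φ(e)`. -/
def IsMorRefinement {G T G' T' : MGraph} (φ : FinHarm G T) (φ' : FinHarm G' T')
    (ιG : G.V → G'.V) (pG : G'.E → Option G.E)
    (ιT : T.V → T'.V) (pT : T'.E → Option T.E) : Prop :=
  (∀ v : G.V, φ'.fV (ιG v) = ιT (φ.fV v)) ∧
  (∀ e : G.E, φ'.fE '' {e' | pG e' = some e} = {t' | pT t' = some (φ.fE e)}) ∧
  (∀ (e' : G'.E) (e : G.E), pG e' = some e → φ'.r e' = φ.r e)

end MGraph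


namespace MGraph

/-! ### Basic auxiliary lemmas -/

section Basic

variable {A B C : MGraph}

lemma Joins.flip {G : MGraph} {e : G.E} {x y : G.V} (h : G.Joins e x y) : G.Joins e y x :=
  h.symm

lemma Iso.joins_map (ψ : Iso A B) {e : A.E} {x y : A.V} (h : A.Joins e x y) :
    B.Joins (ψ.eE e) (ψ.eV x) (ψ.eV y) := by
  have hends := ψ.ends e
  rcases h with ⟨hx, hy⟩ | ⟨hx, hy⟩
  · rw [hx, hy] at hends; exact hends
  · rw [hx, hy] at hends; exact hends.symm

def Iso.symm (ψ : Iso A B) : Iso B A where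
  eV := ψ.eV.symm
  eE := ψ.eE.symm
  ends := fun e => by
    have h := ψ.ends (ψ.eE.symm e)
    rw [Equiv.apply_symm_apply] at h
    rcases h with ⟨h1, h2⟩ | ⟨h1, h2⟩
    · exact Or.inl ⟨by simp [h1], by simp [h2]⟩
    · exact Or.inr ⟨by simp [h2], by simp [h1]⟩

lemma Iso.inc_iff (ψ : Iso A B) (e : A.E) (v : A.V) :
    B.Inc (ψ.eE e) (ψ.eV v) ↔ A.Inc e v := by
  rcases ψ.ends e with ⟨h1, h2⟩ | ⟨h1, h2⟩ <;>
    simp [Inc, h1, h2, ψ.eV.apply_eq_iff_eq, or_comm]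

lemma Refines.congr_maps {ι ι' : A.V → B.V} {p p' : B.E → Option A.E}
    (h : Refines A B ι p) (hι : ∀ v, ι v = ι' v) (hp : ∀ e, p e = p' e) :
    Refines A B ι' p' := by
  have h1 : ι = ι' := funext hι
  have h2 : p = p' := funext hp
  rw [← h1, ← h2]
  exact h

lemma Refines.trans {ι₁ : A.V → B.V} {p₁ : B.E → Option A.E} (h₁ : Refines A B ι₁ p₁)
    {C : MGraph} {ι₂ : B.V → C.V} {p₂ : C.E → Option B.E} (h₂ : Refines B C ι₂ p₂) :
    Refines A C (fun v => ι₂ (ι₁ v)) (fun e => (p₂ e).bind p₁) := by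
  induction h₂ with
  | refl => exact h₁
  | subdiv h e₀ ih =>
      refine (Refines.subdiv ih e₀).congr_maps (fun v => rfl) (fun e => ?_)
      rcases e with e1 | b <;> rfl
  | leaf h v₀ ih =>
      refine (Refines.leaf ih v₀).congr_maps (fun v => rfl) (fun e => ?_)
      rcases e with e1 | u <;> rfl
  | iso h ψ ih =>
      exact (Refines.iso ih ψ).congr_maps (fun v => rfl) (fun e => rfl)

lemma Refines.exists_preimage {ι : A.V → B.V} {p : B.E → Option A.E}
    (h : Refines A B ι p) (a : A.E) : ∃ b, p b = some a := by
  induction h with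
  | refl => exact ⟨a, rfl⟩
  | subdiv h e₀ ih =>
      obtain ⟨b, hb⟩ := ih
      by_cases hbe : b = e₀
      · exact ⟨Sum.inr true, by subst hbe; exact hb⟩
      · exact ⟨Sum.inl ⟨b, hbe⟩, hb⟩
  | leaf h v₀ ih =>
      obtain ⟨b, hb⟩ := ih
      exact ⟨Sum.inl b, hb⟩
  | iso h ψ ih =>
      obtain ⟨b, hb⟩ := ih
      exact ⟨ψ.eE b, by simpa using hb⟩

lemma Refines.loopless {ι : A.V → B.V} {p : B.E → Option A.E}
    (h : Refines A B ι p) (hA : A.Loopless) : B.Loopless := by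
  induction h with
  | refl => exact hA
  | subdiv h e₀ ih =>
      rintro (e1 | b) h'
      · exact ih e1.1 (by simpa [subdivide] using h')
      · cases b <;> simp [subdivide] at h'
  | leaf h v₀ ih =>
      rintro (e1 | u) h'
      · exact ih e1 (by simpa [addLeaf] using h')
      · simp [addLeaf] at h'
  | iso h ψ ih =>
      intro e h'
      have hj := ψ.ends (ψ.eE.symm e)
      rw [Equiv.apply_symm_apply] at hj
      rcases hj with ⟨h1, h2⟩ | ⟨h1, h2⟩
      · rw [h1, h2] at h'
        exact ih _ (ψ.eV.injective h')
      · rw [h1, h2] at h'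
        exact ih _ (ψ.eV.injective h').symm

end Basic

end MGraph


namespace MGraph

/-! ### Connectivity and tree preservation -/

section Tree

variable {A B : MGraph}

lemma adj_symm {G : MGraph} {x y : G.V} (h : G.Adj x y) : G.Adj y x := by
  obtain ⟨e, he⟩ := h; exact ⟨e, he.flip⟩

lemma rtg_lift {α β : Type} {R : α → α → Prop} {R' : β → β → Prop} (f : α → β)
    (hf : ∀ a b, R a b → Relation.ReflTransGen R' (f a) (f b)) {a b : α}
    (h : Relation.ReflTransGen R a b) : Relation.ReflTransGen R' (f a) (f b) := by
  induction h with
  | refl => exact Relation.ReflTransGen.refl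
  | tail _ hstep ih => exact ih.trans (hf _ _ hstep)

lemma rtg_adj_symm {G : MGraph} {x y : G.V}
    (h : Relation.ReflTransGen G.Adj x y) : Relation.ReflTransGen G.Adj y x :=
  (@Relation.ReflTransGen.stdSymm _ _ ⟨fun _ _ => adj_symm⟩).symm _ _ h

lemma subdivide_connected (B : MGraph) (e₀ : B.E) (h : B.Connected) :
    (B.subdivide e₀).Connected := by
  obtain ⟨⟨v⟩, hc⟩ := h
  have hmid : (B.subdivide e₀).Adj (Sum.inr ()) (Sum.inl (B.fst e₀)) :=
    ⟨Sum.inr false, Or.inr ⟨rfl, rfl⟩⟩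
  have key : ∀ x y : B.V,
      Relation.ReflTransGen (B.subdivide e₀).Adj (Sum.inl x) (Sum.inl y) := by
    intro x y
    refine rtg_lift Sum.inl ?_ (hc x y)
    rintro a b ⟨e, he⟩
    by_cases h' : e = e₀
    · subst h'
      rcases he with ⟨h1, h2⟩ | ⟨h1, h2⟩
      · exact Relation.ReflTransGen.head
          ⟨Sum.inr false, Or.inl ⟨congrArg Sum.inl h1, rfl⟩⟩
          (Relation.ReflTransGen.single
            ⟨Sum.inr true, Or.inl ⟨rfl, congrArg Sum.inl h2⟩⟩)
      · exact Relation.ReflTransGen.head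
          ⟨Sum.inr true, Or.inr ⟨rfl, congrArg Sum.inl h2⟩⟩
          (Relation.ReflTransGen.single
            ⟨Sum.inr false, Or.inr ⟨congrArg Sum.inl h1, rfl⟩⟩)
    · refine Relation.ReflTransGen.single ⟨Sum.inl ⟨e, h'⟩, ?_⟩
      rcases he with ⟨h1, h2⟩ | ⟨h1, h2⟩
      · exact Or.inl ⟨congrArg Sum.inl h1, congrArg Sum.inl h2⟩
      · exact Or.inr ⟨congrArg Sum.inl h1, congrArg Sum.inl h2⟩
  refine ⟨⟨Sum.inl v⟩, ?_⟩
  have toInl : ∀ z : (B.subdivide e₀).V, ∃ w,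
      Relation.ReflTransGen (B.subdivide e₀).Adj z (Sum.inl w) := by
    rintro (z | ⟨⟩)
    · exact ⟨z, Relation.ReflTransGen.refl⟩
    · exact ⟨B.fst e₀, Relation.ReflTransGen.single hmid⟩
  intro x y
  obtain ⟨wx, hx⟩ := toInl x
  obtain ⟨wy, hy⟩ := toInl y
  exact (hx.trans (key wx wy)).trans (rtg_adj_symm hy)

lemma addLeaf_connected (B : MGraph) (v₀ : B.V) (h : B.Connected) :
    (B.addLeaf v₀).Connected := by
  obtain ⟨⟨v⟩, hc⟩ := h
  have hleaf : (B.addLeaf v₀).Adj (Sum.inr ()) (Sum.inl v₀) :=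
    ⟨Sum.inr (), Or.inr ⟨rfl, rfl⟩⟩
  have key : ∀ x y : B.V,
      Relation.ReflTransGen (B.addLeaf v₀).Adj (Sum.inl x) (Sum.inl y) := by
    intro x y
    refine rtg_lift Sum.inl ?_ (hc x y)
    rintro a b ⟨e, he⟩
    refine Relation.ReflTransGen.single ⟨Sum.inl e, ?_⟩
    rcases he with ⟨h1, h2⟩ | ⟨h1, h2⟩
    · exact Or.inl ⟨congrArg Sum.inl h1, congrArg Sum.inl h2⟩
    · exact Or.inr ⟨congrArg Sum.inl h1, congrArg Sum.inl h2⟩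
  refine ⟨⟨Sum.inl v⟩, ?_⟩
  have toInl : ∀ z : (B.addLeaf v₀).V, ∃ w,
      Relation.ReflTransGen (B.addLeaf v₀).Adj z (Sum.inl w) := by
    rintro (z | ⟨⟩)
    · exact ⟨z, Relation.ReflTransGen.refl⟩
    · exact ⟨v₀, Relation.ReflTransGen.single hleaf⟩
  intro x y
  obtain ⟨wx, hx⟩ := toInl x
  obtain ⟨wy, hy⟩ := toInl y
  exact (hx.trans (key wx wy)).trans (rtg_adj_symm hy)

lemma iso_connected (ψ : Iso A B) (h : A.Connected) : B.Connected := by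
  obtain ⟨⟨v⟩, hc⟩ := h
  refine ⟨⟨ψ.eV v⟩, fun x y => ?_⟩
  have := rtg_lift (R := A.Adj) (R' := B.Adj) ψ.eV
    (fun a b hab => Relation.ReflTransGen.single
      (by obtain ⟨e, he⟩ := hab; exact ⟨ψ.eE e, ψ.joins_map he⟩))
    (hc (ψ.eV.symm x) (ψ.eV.symm y))
  simpa using this

lemma card_ne_add_one {α : Type} [Fintype α] (a : α) :
    Fintype.card {x : α // x ≠ a} + 1 = Fintype.card α := by
  have h := Fintype.card_congr (Equiv.sumCompl (fun x : α => x = a)).symm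
  rw [Fintype.card_sum, Fintype.card_subtype_eq] at h
  have h2 : Fintype.card {x : α // x ≠ a} = Fintype.card {x : α // ¬ x = a} :=
    Fintype.card_congr (Equiv.refl _)
  omega

private def stepN {α : Type} (R : α → α → Prop) : ℕ → α → α → Prop
  | 0 => fun a b => a = b
  | (n+1) => fun a c => ∃ b, stepN R n a b ∧ R b c

private lemma rtg_stepN {α : Type} {R : α → α → Prop} {a b : α}
    (h : Relation.ReflTransGen R a b) : ∃ n, stepN R n a b := by
  induction h with
  | refl => exact ⟨0, rfl⟩
  | tail _ hstep ih => obtain ⟨n, hn⟩ := ih; exact ⟨n + 1, _, hn, hstep⟩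

lemma connected_card_le (G : MGraph) (h : G.Connected) :
    Fintype.card G.V ≤ Fintype.card {e : G.E // G.fst e ≠ G.snd e} + 1 := by
  obtain ⟨⟨v₀⟩, hc⟩ := h
  have hex : ∀ v, ∃ n, stepN G.Adj n v₀ v := fun v => rtg_stepN (hc v₀ v)
  have key : ∀ v : {x : G.V // x ≠ v₀}, ∃ e : {e : G.E // G.fst e ≠ G.snd e},
      ∃ u : G.V, G.Joins e.1 u v.1 ∧ Nat.find (hex u) < Nat.find (hex v.1) := by
    rintro ⟨v, hv⟩
    have hs := Nat.find_spec (hex v)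
    rcases hn : Nat.find (hex v) with _ | n
    · rw [hn] at hs; exact absurd hs.symm hv
    · rw [hn] at hs
      obtain ⟨u, hu, e, he⟩ := hs
      have hdu : Nat.find (hex u) ≤ n := Nat.find_min' (hex u) hu
      have hne : u ≠ v := by
        rintro rfl
        rw [hn] at hdu
        omega
      have hloop : G.fst e ≠ G.snd e := by
        rcases he with ⟨h1, h2⟩ | ⟨h1, h2⟩
        · rw [h1, h2]; exact hne
        · rw [h1, h2]; exact fun hh => hne hh.symm
      exact ⟨⟨e, hloop⟩, u, he, by omega⟩
  choose f u hj hlt using key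
  have hinj : Function.Injective f := by
    rintro v v' hff
    by_contra hne
    have hne' : v.1 ≠ v'.1 := fun hh => hne (Subtype.ext hh)
    have h1 := hj v
    have h2 := hj v'
    have hl1 := hlt v
    have hl2 := hlt v'
    rw [hff] at h1
    rcases h1 with ⟨a1, b1⟩ | ⟨a1, b1⟩ <;> rcases h2 with ⟨a2, b2⟩ | ⟨a2, b2⟩
    · exact hne' (b1.symm.trans b2)
    · have e1 : u v = v'.1 := a1.symm.trans a2
      have e2 : u v' = v.1 := b2.symm.trans b1
      rw [e1] at hl1; rw [e2] at hl2; omega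
    · have e1 : u v = v'.1 := b1.symm.trans b2
      have e2 : u v' = v.1 := a2.symm.trans a1
      rw [e1] at hl1; rw [e2] at hl2; omega
    · exact hne' (a1.symm.trans a2)
  have hcard := Fintype.card_le_of_injective f hinj
  have h2 := card_ne_add_one (α := G.V) v₀
  omega

lemma IsTree.loopless {T : MGraph} (h : T.IsTree) : T.Loopless := by
  intro e he
  have h1 := connected_card_le T h.1
  have h2 : Fintype.card {e' : T.E // T.fst e' ≠ T.snd e'} ≤
      Fintype.card {e' : T.E // e' ≠ e} := by
    apply Fintype.card_le_of_injective
      (fun x => (⟨x.1, fun hx => x.2 (hx ▸ he)⟩ : {e' : T.E // e' ≠ e}))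
    intro a b hab
    exact Subtype.ext (by simpa [Subtype.ext_iff] using hab)
  have h3 := card_ne_add_one (α := T.E) e
  have h4 := h.2
  omega

lemma Refines.isTree {ι : A.V → B.V} {p : B.E → Option A.E}
    (h : Refines A B ι p) (hA : A.IsTree) : B.IsTree := by
  induction h with
  | refl => exact hA
  | @subdiv B' ι' p' h e₀ ih =>
      refine ⟨subdivide_connected _ e₀ ih.1, ?_⟩
      have h1 : Fintype.card (subdivide B' e₀).V = Fintype.card B'.V + 1 := by
        rw [show Fintype.card (subdivide B' e₀).V = Fintype.card (B'.V ⊕ Unit) from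
          Fintype.card_congr (Equiv.refl _), Fintype.card_sum]
        simp
      have h2 : Fintype.card (subdivide B' e₀).E =
          Fintype.card {e : B'.E // e ≠ e₀} + 2 := by
        rw [show Fintype.card (subdivide B' e₀).E =
            Fintype.card ({e : B'.E // e ≠ e₀} ⊕ Bool) from
          Fintype.card_congr (Equiv.refl _), Fintype.card_sum]
        simp
      have h3 := card_ne_add_one (α := B'.E) e₀
      have h4 := ih.2
      omega
  | @leaf B' ι' p' h v₀ ih =>
      refine ⟨addLeaf_connected _ v₀ ih.1, ?_⟩
      have h1 : Fintype.card (addLeaf B' v₀).V = Fintype.card B'.V + 1 := by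
        rw [show Fintype.card (addLeaf B' v₀).V = Fintype.card (B'.V ⊕ Unit) from
          Fintype.card_congr (Equiv.refl _), Fintype.card_sum]
        simp
      have h2 : Fintype.card (addLeaf B' v₀).E = Fintype.card B'.E + 1 := by
        rw [show Fintype.card (addLeaf B' v₀).E = Fintype.card (B'.E ⊕ Unit) from
          Fintype.card_congr (Equiv.refl _), Fintype.card_sum]
        simp
      have h4 := ih.2
      omega
  | @iso B' ι' p' h B'' ψ ih =>
      refine ⟨iso_connected ψ ih.1, ?_⟩
      have h1 := Fintype.card_congr ψ.eV
      have h2 := Fintype.card_congr ψ.eE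
      have h4 := ih.2
      omega

end Tree

end MGraph


namespace MGraph

section MorAux

variable {G T G₁ T₁ G₂ T₂ : MGraph}

/-- Compose a finite harmonic morphism with an isomorphism of targets. -/
def FinHarm.ofIsoTarget (φ : FinHarm G T₁) (ψ : Iso T₁ T₂) : FinHarm G T₂ where
  fV v := ψ.eV (φ.fV v)
  fE e := ψ.eE (φ.fE e)
  r := φ.r
  r_pos := φ.r_pos
  ends e := ψ.joins_map (φ.ends e)
  m := φ.m
  m_pos := φ.m_pos
  harm := by
    intro v e'' hi
    have hi' : T₁.Inc (ψ.eE.symm e'') (φ.fV v) := by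
      rw [show e'' = ψ.eE (ψ.eE.symm e'') from (ψ.eE.apply_symm_apply e'').symm] at hi
      rwa [ψ.inc_iff] at hi
    rw [φ.harm v _ hi']
    refine Finset.sum_congr (Finset.filter_congr fun e _ => ?_) (fun _ _ => rfl)
    simp [ψ.eE.apply_eq_iff_eq_symm_apply]

lemma FinHarm.ofIsoTarget_isDegree {φ : FinHarm G T₁} {ψ : Iso T₁ T₂} {d : ℕ}
    (hd : φ.IsDegree d) : (φ.ofIsoTarget ψ).IsDegree d := by
  constructor
  · intro v'
    have hfilter : (Finset.univ.filter fun v => (φ.ofIsoTarget ψ).fV v = v') =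
        (Finset.univ.filter fun v => φ.fV v = ψ.eV.symm v') := by
      apply Finset.filter_congr
      intro v _
      simp [FinHarm.ofIsoTarget, Equiv.apply_eq_iff_eq_symm_apply]
    rw [hfilter]
    exact hd.1 _
  · intro t'
    have hfilter : (Finset.univ.filter fun e => (φ.ofIsoTarget ψ).fE e = t') =
        (Finset.univ.filter fun e => φ.fE e = ψ.eE.symm t') := by
      apply Finset.filter_congr
      intro e _
      simp [FinHarm.ofIsoTarget, Equiv.apply_eq_iff_eq_symm_apply]
    rw [hfilter]
    exact hd.2 _

lemma FinHarm.ofIsoTarget_isMorRef (φ : FinHarm G T₁) (ψ : Iso T₁ T₂) :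
    IsMorRefinement φ (φ.ofIsoTarget ψ) id (fun e => some e) ψ.eV
      (fun t => some (ψ.eE.symm t)) := by
  refine ⟨fun v => rfl, fun e => ?_, fun e' e h => by cases Option.some.inj h; rfl⟩
  ext t
  constructor
  · rintro ⟨x, hx, rfl⟩
    cases Option.some.inj hx
    simp [FinHarm.ofIsoTarget]
  · intro ht
    have : t = ψ.eE (φ.fE e) := by
      have := Option.some.inj ht
      rw [← this, Equiv.apply_symm_apply]
    exact ⟨e, rfl, this.symm⟩

lemma IsMorRefinement.refl (φ : FinHarm G T) :
    IsMorRefinement φ φ id (fun e => some e) id (fun e => some e) := by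
  refine ⟨fun v => rfl, fun e => ?_, fun e' e h => by cases Option.some.inj h; rfl⟩
  ext t
  simp [Set.mem_image, eq_comm]

lemma IsMorRefinement.comp {φ : FinHarm G T} {φ₁ : FinHarm G₁ T₁} {φ₂ : FinHarm G₂ T₂}
    {ιG : G.V → G₁.V} {pG : G₁.E → Option G.E} {ιT : T.V → T₁.V} {pT : T₁.E → Option T.E}
    {ι₁ : G₁.V → G₂.V} {p₁ : G₂.E → Option G₁.E} {τ₁ : T₁.V → T₂.V} {q₁ : T₂.E → Option T₁.E}
    (h1 : IsMorRefinement φ φ₁ ιG pG ιT pT)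
    (h2 : IsMorRefinement φ₁ φ₂ ι₁ p₁ τ₁ q₁) :
    IsMorRefinement φ φ₂ (fun v => ι₁ (ιG v)) (fun e => (p₁ e).bind pG)
      (fun v => τ₁ (ιT v)) (fun t => (q₁ t).bind pT) := by
  obtain ⟨a1, b1, c1⟩ := h1
  obtain ⟨a2, b2, c2⟩ := h2
  refine ⟨fun v => by rw [a2, a1], ?_, ?_⟩
  · intro e
    ext t₂
    simp only [Set.mem_image, Set.mem_setOf_eq]
    constructor
    · rintro ⟨e₂, he₂, rfl⟩
      obtain ⟨em, hp, hq⟩ := Option.bind_eq_some_iff.mp he₂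
      have hmem : φ₂.fE e₂ ∈ {t' | q₁ t' = some (φ₁.fE em)} := by
        rw [← b2 em]; exact ⟨e₂, hp, rfl⟩
      have hmem2 : φ₁.fE em ∈ {t' | pT t' = some (φ.fE e)} := by
        rw [← b1 e]; exact ⟨em, hq, rfl⟩
      exact Option.bind_eq_some_iff.mpr ⟨_, hmem, hmem2⟩
    · intro ht
      obtain ⟨t₁, hq, hp⟩ := Option.bind_eq_some_iff.mp ht
      have hmem : t₁ ∈ φ₁.fE '' {em | pG em = some e} := by rw [b1]; exact hp
      obtain ⟨em, hem, rfl⟩ := hmem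
      have hmem2 : t₂ ∈ φ₂.fE '' {e₂ | p₁ e₂ = some em} := by rw [b2]; exact hq
      obtain ⟨e₂, he₂, rfl⟩ := hmem2
      exact ⟨e₂, Option.bind_eq_some_iff.mpr ⟨em, he₂, hem⟩, rfl⟩
  · intro e₂ e h
    obtain ⟨em, hp, hq⟩ := Option.bind_eq_some_iff.mp h
    rw [c2 _ _ hp, c1 _ _ hq]

end MorAux

end MGraph


namespace MGraph

/-! ### Simultaneous subdivisions and leaf additions -/

section FinsetOps

variable (G : MGraph)

/-- Subdivide all edges in `S` simultaneously. -/
@[reducible] def subdivideFinset (S : Finset G.E) : MGraph where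
  V := G.V ⊕ {x // x ∈ S}
  E := G.E ⊕ {x // x ∈ S}
  fst := Sum.elim (fun e => Sum.inl (G.fst e)) (fun s => Sum.inr s)
  snd := Sum.elim (fun e => if h : e ∈ S then Sum.inr ⟨e, h⟩ else Sum.inl (G.snd e))
    (fun s => Sum.inl (G.snd s.1))

/-- Add a leaf at each vertex in `S` simultaneously. -/
@[reducible] def addLeafFinset (S : Finset G.V) : MGraph where
  V := G.V ⊕ {x // x ∈ S}
  E := G.E ⊕ {x // x ∈ S}
  fst := Sum.elim (fun e => Sum.inl (G.fst e)) (fun s => Sum.inl s.1)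
  snd := Sum.elim (fun e => Sum.inl (G.snd e)) (fun s => Sum.inr s)

def pSub (S : Finset G.E) : (G.subdivideFinset S).E → Option G.E :=
  Sum.elim some (fun s => some s.1)

def pLeaf (S : Finset G.V) : (G.addLeafFinset S).E → Option G.E :=
  Sum.elim some (fun _ => none)

def emptyElim {α : Type} {C : Sort _} (s : {x : α // x ∈ (∅ : Finset α)}) : C :=
  absurd s.2 (Finset.notMem_empty _)

def isoSubdivideEmpty : Iso G (G.subdivideFinset ∅) where
  eV := ⟨Sum.inl, Sum.elim id emptyElim,
    fun v => rfl,
    by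
      rintro (v | s)
      · rfl
      · exact emptyElim s⟩
  eE := ⟨Sum.inl, Sum.elim id emptyElim,
    fun e => rfl,
    by
      rintro (e | s)
      · rfl
      · exact emptyElim s⟩
  ends e := Or.inl ⟨rfl, by
    show (G.subdivideFinset ∅).snd (Sum.inl e) = Sum.inl (G.snd e)
    show (if h : e ∈ (∅ : Finset G.E) then (Sum.inr ⟨e, h⟩ : G.V ⊕ {x // x ∈ (∅ : Finset G.E)}) else Sum.inl (G.snd e))
      = Sum.inl (G.snd e)
    rw [dif_neg (Finset.notMem_empty e)]⟩

def isoAddLeafEmpty : Iso G (G.addLeafFinset ∅) where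
  eV := ⟨Sum.inl, Sum.elim id emptyElim,
    fun v => rfl,
    by
      rintro (v | s)
      · rfl
      · exact emptyElim s⟩
  eE := ⟨Sum.inl, Sum.elim id emptyElim,
    fun e => rfl,
    by
      rintro (e | s)
      · rfl
      · exact emptyElim s⟩
  ends e := Or.inl ⟨rfl, rfl⟩

def isoSubdivideInsert (a : G.E) (S : Finset G.E) (ha : a ∉ S) :
    Iso (subdivide (G.subdivideFinset S) (Sum.inl a)) (G.subdivideFinset (insert a S)) where
  eV := { toFun := Sum.elim (Sum.elim (fun v => Sum.inl v)
            (fun s => Sum.inr ⟨s.1, Finset.mem_insert_of_mem s.2⟩))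
            (fun _ => Sum.inr ⟨a, Finset.mem_insert_self a S⟩)
          invFun := Sum.elim (fun v => Sum.inl (Sum.inl v))
            (fun s => if h : s.1 ∈ S then Sum.inl (Sum.inr ⟨s.1, h⟩) else Sum.inr ())
          left_inv := by
            rintro ((v | s) | ⟨⟩)
            · rfl
            · exact dif_pos s.2
            · exact dif_neg ha
          right_inv := by
            rintro (v | s)
            · rfl
            · by_cases h : s.1 ∈ S
              · simp [Sum.elim, h]
              · have hsa : s.1 = a := by
                  rcases Finset.mem_insert.mp s.2 with h' | h'
                  · exact h'
                  · exact absurd h' h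
                simp only [Sum.elim]
                obtain ⟨sv, hs⟩ := s; simp only at hsa h; subst hsa; simp [h] }
  eE := { toFun := fun x => match x with
            | .inl ⟨.inl e, _⟩ => .inl e
            | .inl ⟨.inr s, _⟩ => .inr ⟨s.1, Finset.mem_insert_of_mem s.2⟩
            | .inr true => .inr ⟨a, Finset.mem_insert_self a S⟩
            | .inr false => .inl a
          invFun := Sum.elim
            (fun e => if h : e = a then Sum.inr false else
              Sum.inl ⟨Sum.inl e, fun hh => h (Sum.inl.inj hh)⟩)
            (fun s => if h : s.1 ∈ S then
              Sum.inl ⟨Sum.inr ⟨s.1, h⟩, fun hh => nomatch hh⟩ else Sum.inr true)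
          left_inv := by
            rintro (⟨e | s, he⟩ | (_ | _))
            · have h2 : e ≠ a := fun hh => he (congrArg Sum.inl hh)
              simp [h2]; rfl
            · simp [s.2]; rfl
            · simp; rfl
            · simp [ha]; rfl
          right_inv := by
            rintro (e | s)
            · by_cases h : e = a
              · subst h; simp
              · simp [h]
            · by_cases h : s.1 ∈ S
              · simp [h]
              · have hsa : s.1 = a := by
                  rcases Finset.mem_insert.mp s.2 with h' | h'
                  · exact h'
                  · exact absurd h' h
                simp only [Sum.elim]
                obtain ⟨sv, hs⟩ := s; simp only at hsa h; subst hsa; simp [h] }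
  ends := by
    rintro (⟨e | s, he⟩ | (_ | _))
    · refine Or.inl ⟨rfl, ?_⟩
      by_cases h : e ∈ S
      · have hsnd : (G.subdivideFinset S).snd (Sum.inl e) = Sum.inr ⟨e, h⟩ := by
          show (if h2 : e ∈ S then (Sum.inr ⟨e, h2⟩ : G.V ⊕ {x // x ∈ S}) else Sum.inl (G.snd e)) = _
          rw [dif_pos h]
        have hmid : ((G.subdivideFinset S).subdivide (Sum.inl a)).snd
            (Sum.inl ⟨Sum.inl e, he⟩) = Sum.inl (Sum.inr ⟨e, h⟩) := by
          show Sum.inl ((G.subdivideFinset S).snd (Sum.inl e)) = _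
          rw [hsnd]
        rw [hmid]
        show (if h2 : e ∈ insert a S then (Sum.inr ⟨e, h2⟩ : G.V ⊕ {x // x ∈ insert a S}) else Sum.inl (G.snd e)) = _
        rw [dif_pos (Finset.mem_insert_of_mem h)]
        rfl
      · have hea : e ≠ a := fun hx => he (congrArg Sum.inl hx)
        have h2 : e ∉ insert a S := by
          rw [Finset.mem_insert]
          rintro (hx | hx)
          · exact hea hx
          · exact h hx
        have hsnd : (G.subdivideFinset S).snd (Sum.inl e) = Sum.inl (G.snd e) := by
          show (if h3 : e ∈ S then (Sum.inr ⟨e, h3⟩ : G.V ⊕ {x // x ∈ S}) else Sum.inl (G.snd e)) = _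
          rw [dif_neg h]
        have hmid : ((G.subdivideFinset S).subdivide (Sum.inl a)).snd
            (Sum.inl ⟨Sum.inl e, he⟩) = Sum.inl (Sum.inl (G.snd e)) := by
          show Sum.inl ((G.subdivideFinset S).snd (Sum.inl e)) = _
          rw [hsnd]
        rw [hmid]
        show (if h3 : e ∈ insert a S then (Sum.inr ⟨e, h3⟩ : G.V ⊕ {x // x ∈ insert a S}) else Sum.inl (G.snd e)) = _
        rw [dif_neg h2]
        rfl
    · exact Or.inl ⟨rfl, rfl⟩
    · -- first half of a
      refine Or.inl ⟨rfl, ?_⟩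
      show (if h2 : a ∈ insert a S then (Sum.inr ⟨a, h2⟩ : G.V ⊕ {x // x ∈ insert a S}) else Sum.inl (G.snd a)) = _
      rw [dif_pos (Finset.mem_insert_self a S)]
      rfl
    · -- second half of a
      refine Or.inl ⟨rfl, ?_⟩
      have hsnd : (G.subdivideFinset S).snd (Sum.inl a) = Sum.inl (G.snd a) := by
        show (if h2 : a ∈ S then (Sum.inr ⟨a, h2⟩ : G.V ⊕ {x // x ∈ S}) else Sum.inl (G.snd a)) = _
        rw [dif_neg ha]
      have hmid : ((G.subdivideFinset S).subdivide (Sum.inl a)).snd (Sum.inr true)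
          = Sum.inl (Sum.inl (G.snd a)) := by
        show Sum.inl ((G.subdivideFinset S).snd (Sum.inl a)) = _
        rw [hsnd]
      rw [hmid]
      rfl

def isoAddLeafInsert (a : G.V) (S : Finset G.V) (ha : a ∉ S) :
    Iso (addLeaf (G.addLeafFinset S) (Sum.inl a)) (G.addLeafFinset (insert a S)) where
  eV := { toFun := Sum.elim (Sum.elim (fun v => Sum.inl v)
            (fun s => Sum.inr ⟨s.1, Finset.mem_insert_of_mem s.2⟩))
            (fun _ => Sum.inr ⟨a, Finset.mem_insert_self a S⟩)
          invFun := Sum.elim (fun v => Sum.inl (Sum.inl v))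
            (fun s => if h : s.1 ∈ S then Sum.inl (Sum.inr ⟨s.1, h⟩) else Sum.inr ())
          left_inv := by
            rintro ((v | s) | ⟨⟩)
            · rfl
            · exact dif_pos s.2
            · exact dif_neg ha
          right_inv := by
            rintro (v | s)
            · rfl
            · by_cases h : s.1 ∈ S
              · simp [Sum.elim, h]
              · have hsa : s.1 = a := by
                  rcases Finset.mem_insert.mp s.2 with h' | h'
                  · exact h'
                  · exact absurd h' h
                simp only [Sum.elim]
                obtain ⟨sv, hs⟩ := s; simp only at hsa h; subst hsa; simp [h] }
  eE := { toFun := Sum.elim (Sum.elim (fun e => Sum.inl e)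
            (fun s => Sum.inr ⟨s.1, Finset.mem_insert_of_mem s.2⟩))
            (fun _ => Sum.inr ⟨a, Finset.mem_insert_self a S⟩)
          invFun := Sum.elim (fun e => Sum.inl (Sum.inl e))
            (fun s => if h : s.1 ∈ S then Sum.inl (Sum.inr ⟨s.1, h⟩) else Sum.inr ())
          left_inv := by
            rintro ((e | s) | ⟨⟩)
            · rfl
            · exact dif_pos s.2
            · exact dif_neg ha
          right_inv := by
            rintro (e | s)
            · rfl
            · by_cases h : s.1 ∈ S
              · simp [Sum.elim, h]
              · have hsa : s.1 = a := by
                  rcases Finset.mem_insert.mp s.2 with h' | h'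
                  · exact h'
                  · exact absurd h' h
                simp only [Sum.elim]
                obtain ⟨sv, hs⟩ := s; simp only at hsa h; subst hsa; simp [h] }
  ends := by
    rintro ((e | s) | ⟨⟩)
    · exact Or.inl ⟨rfl, rfl⟩
    · exact Or.inl ⟨rfl, rfl⟩
    · exact Or.inl ⟨rfl, rfl⟩

end FinsetOps

section CommIsos

variable {A B : MGraph}

/-- Lift an isomorphism through a single subdivision (aligned case). -/
private def subdivideCongrAligned (ψ : Iso A B) (b : A.E)
    (h1 : B.fst (ψ.eE b) = ψ.eV (A.fst b)) (h2 : B.snd (ψ.eE b) = ψ.eV (A.snd b)) :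
    Iso (A.subdivide b) (B.subdivide (ψ.eE b)) where
  eV := Equiv.sumCongr ψ.eV (Equiv.refl Unit)
  eE := { toFun := Sum.elim
            (fun e1 => Sum.inl ⟨ψ.eE e1.1, fun hh => e1.2 (ψ.eE.injective hh)⟩)
            (fun bb => Sum.inr bb)
          invFun := Sum.elim
            (fun e1 => Sum.inl ⟨ψ.eE.symm e1.1, fun hh =>
              e1.2 ((ψ.eE.apply_symm_apply e1.1).symm.trans (congrArg ψ.eE hh))⟩)
            (fun bb => Sum.inr bb)
          left_inv := by
            rintro (e1 | bb)
            · simp [Sum.elim]; rfl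
            · rfl
          right_inv := by
            rintro (e1 | bb)
            · simp [Sum.elim]; rfl
            · rfl }
  ends := by
    rintro (e1 | bb)
    · rcases ψ.ends e1.1 with ⟨ha, hb⟩ | ⟨ha, hb⟩
      · exact Or.inl ⟨congrArg Sum.inl ha, congrArg Sum.inl hb⟩
      · exact Or.inr ⟨congrArg Sum.inl ha, congrArg Sum.inl hb⟩
    · cases bb
      · exact Or.inl ⟨congrArg Sum.inl h1, rfl⟩
      · exact Or.inl ⟨rfl, congrArg Sum.inl h2⟩

/-- Lift an isomorphism through a single subdivision (flipped case). -/
private def subdivideCongrFlipped (ψ : Iso A B) (b : A.E)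
    (h1 : B.fst (ψ.eE b) = ψ.eV (A.snd b)) (h2 : B.snd (ψ.eE b) = ψ.eV (A.fst b)) :
    Iso (A.subdivide b) (B.subdivide (ψ.eE b)) where
  eV := Equiv.sumCongr ψ.eV (Equiv.refl Unit)
  eE := { toFun := Sum.elim
            (fun e1 => Sum.inl ⟨ψ.eE e1.1, fun hh => e1.2 (ψ.eE.injective hh)⟩)
            (fun bb => Sum.inr !bb)
          invFun := Sum.elim
            (fun e1 => Sum.inl ⟨ψ.eE.symm e1.1, fun hh =>
              e1.2 ((ψ.eE.apply_symm_apply e1.1).symm.trans (congrArg ψ.eE hh))⟩)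
            (fun bb => Sum.inr !bb)
          left_inv := by
            rintro (e1 | bb)
            · simp [Sum.elim]; rfl
            · cases bb <;> rfl
          right_inv := by
            rintro (e1 | bb)
            · simp [Sum.elim]; rfl
            · cases bb <;> rfl }
  ends := by
    rintro (e1 | bb)
    · rcases ψ.ends e1.1 with ⟨ha, hb⟩ | ⟨ha, hb⟩
      · exact Or.inl ⟨congrArg Sum.inl ha, congrArg Sum.inl hb⟩
      · exact Or.inr ⟨congrArg Sum.inl ha, congrArg Sum.inl hb⟩
    · cases bb
      · exact Or.inr ⟨rfl, congrArg Sum.inl h2⟩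
      · exact Or.inr ⟨congrArg Sum.inl h1, rfl⟩

/-- Lift an isomorphism through a single subdivision. -/
def Iso.subdivideCongr (ψ : Iso A B) (b : A.E) :
    Iso (A.subdivide b) (B.subdivide (ψ.eE b)) :=
  if hal : B.fst (ψ.eE b) = ψ.eV (A.fst b) then
    subdivideCongrAligned ψ b hal (by
      rcases ψ.ends b with ⟨ha, hb⟩ | ⟨ha, hb⟩
      · exact hb
      · rw [hb, ψ.eV.apply_eq_iff_eq.mp (ha.symm.trans hal)])
  else
    subdivideCongrFlipped ψ b (by
      rcases ψ.ends b with ⟨ha, hb⟩ | ⟨ha, hb⟩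
      · exact absurd ha hal
      · exact ha) (by
      rcases ψ.ends b with ⟨ha, hb⟩ | ⟨ha, hb⟩
      · exact absurd ha hal
      · exact hb)

lemma Iso.subdivideCongr_eV_inl (ψ : Iso A B) (b : A.E) (x : A.V) :
    (ψ.subdivideCongr b).eV (Sum.inl x) = Sum.inl (ψ.eV x) := by
  unfold Iso.subdivideCongr
  split <;> rfl

/-- Lift an isomorphism through a leaf addition. -/
def Iso.addLeafCongr (ψ : Iso A B) (v : A.V) :
    Iso (A.addLeaf v) (B.addLeaf (ψ.eV v)) where
  eV := Equiv.sumCongr ψ.eV (Equiv.refl Unit)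
  eE := Equiv.sumCongr ψ.eE (Equiv.refl Unit)
  ends := by
    rintro (e | ⟨⟩)
    · rcases ψ.ends e with ⟨h1, h2⟩ | ⟨h1, h2⟩
      · exact Or.inl ⟨congrArg Sum.inl h1, congrArg Sum.inl h2⟩
      · exact Or.inr ⟨congrArg Sum.inl h1, congrArg Sum.inl h2⟩
    · exact Or.inl ⟨rfl, rfl⟩

/-- Commuting two subdivisions. -/
def subdivideComm (B : MGraph) (b e₀ : B.E) (hne : b ≠ e₀) :
    Iso (subdivide (B.subdivide b) (Sum.inl ⟨e₀, Ne.symm hne⟩))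
      (subdivide (B.subdivide e₀) (Sum.inl ⟨b, hne⟩)) where
  eV := { toFun := fun x => match x with
            | .inl (.inl v) => .inl (.inl v)
            | .inl (.inr ()) => .inr ()
            | .inr () => .inl (.inr ())
          invFun := fun x => match x with
            | .inl (.inl v) => .inl (.inl v)
            | .inl (.inr ()) => .inr ()
            | .inr () => .inl (.inr ())
          left_inv := by rintro ((v | ⟨⟩) | ⟨⟩) <;> rfl
          right_inv := by rintro ((v | ⟨⟩) | ⟨⟩) <;> rfl }
  eE := { toFun := fun x => match x with
            | .inl ⟨.inl e2, h⟩ => .inl ⟨.inl ⟨e2.1,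
                fun hh => h (congrArg Sum.inl (Subtype.ext hh))⟩,
                fun hh => e2.2 (congrArg Subtype.val (Sum.inl.inj hh))⟩
            | .inl ⟨.inr bb, _⟩ => .inr bb
            | .inr bb => .inl ⟨.inr bb, fun hh => nomatch hh⟩
          invFun := fun x => match x with
            | .inl ⟨.inl e2, h⟩ => .inl ⟨.inl ⟨e2.1,
                fun hh => h (congrArg Sum.inl (Subtype.ext hh))⟩,
                fun hh => e2.2 (congrArg Subtype.val (Sum.inl.inj hh))⟩
            | .inl ⟨.inr bb, _⟩ => .inr bb
            | .inr bb => .inl ⟨.inr bb, fun hh => nomatch hh⟩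
          left_inv := by rintro ((⟨e2 | bb, h⟩) | bb) <;> rfl
          right_inv := by rintro ((⟨e2 | bb, h⟩) | bb) <;> rfl }
  ends := by
    rintro ((⟨e2 | bb, h⟩) | bb)
    · exact Or.inl ⟨rfl, rfl⟩
    · cases bb <;> exact Or.inl ⟨rfl, rfl⟩
    · cases bb <;> exact Or.inl ⟨rfl, rfl⟩

/-- Commuting a subdivision past a leaf addition. -/
def subdivideAddLeafComm (B : MGraph) (b : B.E) (v₀ : B.V) :
    Iso (addLeaf (B.subdivide b) (Sum.inl v₀))
      (subdivide (B.addLeaf v₀) (Sum.inl b)) where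
  eV := { toFun := fun x => match x with
            | .inl (.inl v) => .inl (.inl v)
            | .inl (.inr ()) => .inr ()
            | .inr () => .inl (.inr ())
          invFun := fun x => match x with
            | .inl (.inl v) => .inl (.inl v)
            | .inl (.inr ()) => .inr ()
            | .inr () => .inl (.inr ())
          left_inv := by rintro ((v | ⟨⟩) | ⟨⟩) <;> rfl
          right_inv := by rintro ((v | ⟨⟩) | ⟨⟩) <;> rfl }
  eE := { toFun := fun x => match x with
            | .inl (.inl e2) => .inl ⟨.inl e2.1,
                fun hh => e2.2 (Sum.inl.inj hh)⟩
            | .inl (.inr bb) => .inr bb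
            | .inr () => .inl ⟨.inr (), fun hh => nomatch hh⟩
          invFun := fun x => match x with
            | .inl ⟨.inl e, h⟩ => .inl (.inl ⟨e, fun hh => h (congrArg Sum.inl hh)⟩)
            | .inl ⟨.inr (), _⟩ => .inr ()
            | .inr bb => .inl (.inr bb)
          left_inv := by rintro ((e2 | bb) | ⟨⟩) <;> rfl
          right_inv := by rintro ((⟨e | ⟨⟩, h⟩) | bb) <;> rfl }
  ends := by
    rintro ((e2 | bb) | ⟨⟩)
    · exact Or.inl ⟨rfl, rfl⟩
    · cases bb <;> exact Or.inl ⟨rfl, rfl⟩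
    · exact Or.inl ⟨rfl, rfl⟩

/-- Commuting two leaf additions. -/
def addLeafComm (B : MGraph) (u w : B.V) :
    Iso (addLeaf (B.addLeaf u) (Sum.inl w))
      (addLeaf (B.addLeaf w) (Sum.inl u)) where
  eV := { toFun := fun x => match x with
            | .inl (.inl v) => .inl (.inl v)
            | .inl (.inr ()) => .inr ()
            | .inr () => .inl (.inr ())
          invFun := fun x => match x with
            | .inl (.inl v) => .inl (.inl v)
            | .inl (.inr ()) => .inr ()
            | .inr () => .inl (.inr ())
          left_inv := by rintro ((v | ⟨⟩) | ⟨⟩) <;> rfl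
          right_inv := by rintro ((v | ⟨⟩) | ⟨⟩) <;> rfl }
  eE := { toFun := fun x => match x with
            | .inl (.inl e) => .inl (.inl e)
            | .inl (.inr ()) => .inr ()
            | .inr () => .inl (.inr ())
          invFun := fun x => match x with
            | .inl (.inl e) => .inl (.inl e)
            | .inl (.inr ()) => .inr ()
            | .inr () => .inl (.inr ())
          left_inv := by rintro ((e | ⟨⟩) | ⟨⟩) <;> rfl
          right_inv := by rintro ((e | ⟨⟩) | ⟨⟩) <;> rfl }
  ends := by
    rintro ((e | ⟨⟩) | ⟨⟩)
    · exact Or.inl ⟨rfl, rfl⟩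
    · exact Or.inl ⟨rfl, rfl⟩
    · exact Or.inl ⟨rfl, rfl⟩

end CommIsos

end MGraph


namespace MGraph

section RefinesFinset

variable (G : MGraph)

lemma refines_subdivideFinset (S : Finset G.E) :
    Refines G (G.subdivideFinset S) Sum.inl (G.pSub S) := by
  induction S using Finset.induction_on with
  | empty =>
      refine ((Refines.refl G).iso (G.isoSubdivideEmpty)).congr_maps
        (fun v => rfl) (fun e => ?_)
      rcases e with e | s
      · rfl
      · exact emptyElim s
  | @insert a S ha ih =>
      refine ((Refines.subdiv ih (Sum.inl a)).iso (G.isoSubdivideInsert a S ha)).congr_maps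
        (fun v => rfl) (fun e => ?_)
      rcases e with e | s
      · by_cases hea : e = a
        · subst hea
          simp [isoSubdivideInsert, pSub]
        · simp [isoSubdivideInsert, pSub, hea]
      · by_cases hs : s.1 ∈ S
        · simp [isoSubdivideInsert, pSub, hs]
        · have hsa : s.1 = a := by
            rcases Finset.mem_insert.mp s.2 with h' | h'
            · exact h'
            · exact absurd h' hs
          simp [isoSubdivideInsert, pSub, hs, hsa, ha]

lemma refines_addLeafFinset (S : Finset G.V) :
    Refines G (G.addLeafFinset S) Sum.inl (G.pLeaf S) := by
  induction S using Finset.induction_on with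
  | empty =>
      refine ((Refines.refl G).iso (G.isoAddLeafEmpty)).congr_maps
        (fun v => rfl) (fun e => ?_)
      rcases e with e | s
      · rfl
      · exact emptyElim s
  | @insert a S ha ih =>
      refine ((Refines.leaf ih (Sum.inl a)).iso (G.isoAddLeafInsert a S ha)).congr_maps
        (fun v => rfl) (fun e => ?_)
      rcases e with e | s
      · rfl
      · by_cases hs : s.1 ∈ S
        · show Sum.elim _ _ (dite (s.1 ∈ S) _ _) = _; split <;> rfl
        · show Sum.elim _ _ (dite (s.1 ∈ S) _ _) = _; split <;> rfl

end RefinesFinset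

section Commute

variable {A B : MGraph}

lemma Refines.subdivCommute {ι : A.V → B.V} {p : B.E → Option A.E}
    (h : Refines A B ι p) : ∀ (bhat : B.E) (ahat : A.E), p bhat = some ahat →
    ∃ ι' p', Refines (A.subdivide ahat) (B.subdivide bhat) ι' p' ∧
      ∀ v, ι' (Sum.inl v) = Sum.inl (ι v) := by
  induction h with
  | refl =>
      intro bhat ahat hp
      cases Option.some.inj hp
      exact ⟨_, _, Refines.refl _, fun v => rfl⟩
  | @subdiv B' ι' p' h e₀ ih =>
      rintro (⟨b, hb⟩ | bb) ahat hp
      · obtain ⟨ι2, p2, R, hι⟩ := ih b ahat hp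
        have R2 := Refines.subdiv R (Sum.inl ⟨e₀, Ne.symm hb⟩)
        have R3 := Refines.iso R2 (subdivideComm B' b e₀ hb)
        refine ⟨_, _, R3, fun v => ?_⟩
        show (subdivideComm B' b e₀ hb).eV (Sum.inl (ι2 (Sum.inl v))) = _
        rw [hι v]
        rfl
      · obtain ⟨ι2, p2, R, hι⟩ := ih e₀ ahat hp
        refine ⟨_, _, Refines.subdiv R (Sum.inr bb), fun v => ?_⟩
        show Sum.inl (ι2 (Sum.inl v)) = _
        rw [hι v]
  | @leaf B' ι' p' h v₀ ih =>
      rintro (b | u) ahat hp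
      · obtain ⟨ι2, p2, R, hι⟩ := ih b ahat hp
        have R2 := Refines.leaf R (Sum.inl v₀)
        have R3 := Refines.iso R2 (subdivideAddLeafComm B' b v₀)
        refine ⟨_, _, R3, fun v => ?_⟩
        show (subdivideAddLeafComm B' b v₀).eV (Sum.inl (ι2 (Sum.inl v))) = _
        rw [hι v]
        rfl
      · exact absurd hp (by simp)
  | @iso B' ι' p' h B'' ψ ih =>
      intro bhat ahat hp
      obtain ⟨b, rfl⟩ : ∃ b, ψ.eE b = bhat := ⟨ψ.eE.symm bhat, ψ.eE.apply_symm_apply bhat⟩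
      simp only [Equiv.symm_apply_apply] at hp
      obtain ⟨ι2, p2, R, hι⟩ := ih b ahat hp
      have R2 := Refines.iso R (ψ.subdivideCongr b)
      refine ⟨_, _, R2, fun v => ?_⟩
      show (ψ.subdivideCongr b).eV (ι2 (Sum.inl v)) = _
      rw [hι v]
      exact ψ.subdivideCongr_eV_inl b (ι' v)

lemma Refines.leafCommute {ι : A.V → B.V} {p : B.E → Option A.E}
    (h : Refines A B ι p) (vhat : A.V) :
    ∃ ι' p', Refines (A.addLeaf vhat) (B.addLeaf (ι vhat)) ι' p' ∧
      ∀ v, ι' (Sum.inl v) = Sum.inl (ι v) := by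
  induction h with
  | refl => exact ⟨_, _, Refines.refl _, fun v => rfl⟩
  | @subdiv B' ι' p' h e₀ ih =>
      obtain ⟨ι2, p2, R, hι⟩ := ih
      have R2 := Refines.subdiv R (Sum.inl e₀)
      have R3 := Refines.iso R2 (Iso.symm (subdivideAddLeafComm B' e₀ (ι' vhat)))
      refine ⟨_, _, R3, fun v => ?_⟩
      show (Iso.symm (subdivideAddLeafComm B' e₀ (ι' vhat))).eV
        (Sum.inl (ι2 (Sum.inl v))) = _
      rw [hι v]
      rfl
  | @leaf B' ι' p' h w₀ ih =>
      obtain ⟨ι2, p2, R, hι⟩ := ih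
      have R2 := Refines.leaf R (Sum.inl w₀)
      have R3 := Refines.iso R2 (addLeafComm B' (ι' vhat) w₀)
      refine ⟨_, _, R3, fun v => ?_⟩
      show (addLeafComm B' (ι' vhat) w₀).eV (Sum.inl (ι2 (Sum.inl v))) = _
      rw [hι v]
      rfl
  | @iso B' ι' p' h B'' ψ ih =>
      obtain ⟨ι2, p2, R, hι⟩ := ih
      have R2 := Refines.iso R (ψ.addLeafCongr (ι' vhat))
      refine ⟨_, _, R2, fun v => ?_⟩
      show (ψ.addLeafCongr (ι' vhat)).eV (ι2 (Sum.inl v)) = _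
      rw [hι v]
      rfl

lemma refines_subdivide_mem (G : MGraph) (S : Finset G.E) {e : G.E} (he : e ∈ S) :
    ∃ ι p, Refines (G.subdivide e) (G.subdivideFinset S) ι p ∧
      ∀ v, ι (Sum.inl v) = Sum.inl v := by
  have base := G.refines_subdivideFinset (S.erase e)
  have hp : G.pSub (S.erase e) (Sum.inl e) = some e := rfl
  obtain ⟨ι2, p2, R, hι⟩ := base.subdivCommute (Sum.inl e) e hp
  have R2 := Refines.iso R (G.isoSubdivideInsert e (S.erase e) (Finset.notMem_erase e S))
  have hSE : insert e (S.erase e) = S := Finset.insert_erase he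
  rw [← hSE]
  refine ⟨_, _, R2, fun v => ?_⟩
  show (G.isoSubdivideInsert e (S.erase e) _).eV (ι2 (Sum.inl v)) = _
  rw [hι v]
  rfl

lemma refines_addLeaf_mem (G : MGraph) (S : Finset G.V) {a : G.V} (ha : a ∈ S) :
    ∃ ι p, Refines (G.addLeaf a) (G.addLeafFinset S) ι p ∧
      ∀ v, ι (Sum.inl v) = Sum.inl v := by
  have base := G.refines_addLeafFinset (S.erase a)
  obtain ⟨ι2, p2, R, hι⟩ := base.leafCommute a
  have R2 := Refines.iso R (G.isoAddLeafInsert a (S.erase a) (Finset.notMem_erase a S))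
  have hSE : insert a (S.erase a) = S := Finset.insert_erase ha
  rw [← hSE]
  refine ⟨_, _, R2, fun v => ?_⟩
  show (G.isoAddLeafInsert a (S.erase a) _).eV (ι2 (Sum.inl v)) = _
  rw [hι v]
  rfl

end Commute

end MGraph

namespace MGraph

/-! ### Summation helpers -/

section Sums

lemma sum_dite_mem {γ : Type} [Fintype γ] (S : Finset γ) (g : {x // x ∈ S} → ℕ) :
    ∑ e : γ, (if h : e ∈ S then g ⟨e, h⟩ else 0) = ∑ s : {x // x ∈ S}, g s := by
  calc ∑ e : γ, (if h : e ∈ S then g ⟨e, h⟩ else 0)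
      = ∑ e ∈ S, (if h : e ∈ S then g ⟨e, h⟩ else 0) :=
        (Finset.sum_subset (Finset.subset_univ S) (fun x _ hx => dif_neg hx)).symm
    _ = ∑ s ∈ S.attach, (if h : s.1 ∈ S then g ⟨s.1, h⟩ else 0) :=
        (Finset.sum_attach S _).symm
    _ = ∑ s ∈ S.attach, g s := Finset.sum_congr rfl (fun s _ => by rw [dif_pos s.2])
    _ = ∑ s : {x // x ∈ S}, g s := by rw [Finset.univ_eq_attach]

lemma sum_filter_sum_type {α β : Type} [Fintype α] [Fintype β]
    (P : α ⊕ β → Prop) (f : α ⊕ β → ℕ) :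
    ∑ x ∈ Finset.univ.filter P, f x =
      (∑ a : α, if P (Sum.inl a) then f (Sum.inl a) else 0) +
      (∑ b : β, if P (Sum.inr b) then f (Sum.inr b) else 0) := by
  rw [Finset.sum_filter, Fintype.sum_sum_type]

lemma sum_pair {γ : Type} [Fintype γ] (S : Finset γ)
    (P : γ ⊕ {x // x ∈ S} → Prop) (f : γ ⊕ {x // x ∈ S} → ℕ) :
    ∑ y ∈ Finset.univ.filter P, f y =
      ∑ e : γ, ((if P (Sum.inl e) then f (Sum.inl e) else 0) +
        (if h : e ∈ S then (if P (Sum.inr ⟨e, h⟩) then f (Sum.inr ⟨e, h⟩) else 0) else 0)) := by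
  rw [sum_filter_sum_type, ← sum_dite_mem S (fun s => if P (Sum.inr s) then f (Sum.inr s) else 0),
    ← Finset.sum_add_distrib]

lemma sum_filter_inst {α : Type} [Fintype α] (p : α → Prop) (f : α → ℕ)
    (h1 h2 : DecidablePred p) :
    (@Finset.filter α p h1 Finset.univ).sum f = (@Finset.filter α p h2 Finset.univ).sum f := by
  have h : h1 = h2 := Subsingleton.elim h1 h2
  rw [h]

lemma sum_pair_sFE (G : MGraph) (S : Finset G.E)
    (P : (G.subdivideFinset S).E → Prop) [DecidablePred P]
    (f : (G.subdivideFinset S).E → ℕ) :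
    ∑ y ∈ Finset.univ.filter P, f y =
      ∑ e : G.E, ((if P (Sum.inl e) then f (Sum.inl e) else 0) +
        (if h : e ∈ S then (if P (Sum.inr ⟨e, h⟩) then f (Sum.inr ⟨e, h⟩) else 0) else 0)) := by
  refine (Finset.sum_filter _ _).trans ((Fintype.sum_sum_type _).trans ?_)
  rw [← sum_dite_mem S (fun s => if P (Sum.inr s) then f (Sum.inr s) else 0),
    ← Finset.sum_add_distrib]

lemma sum_split_sFV (G : MGraph) (S : Finset G.E)
    (P : (G.subdivideFinset S).V → Prop) [DecidablePred P]
    (f : (G.subdivideFinset S).V → ℕ) :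
    ∑ y ∈ Finset.univ.filter P, f y =
      (∑ v : G.V, if P (Sum.inl v) then f (Sum.inl v) else 0) +
      (∑ e : G.E, if h : e ∈ S then
        (if P (Sum.inr ⟨e, h⟩) then f (Sum.inr ⟨e, h⟩) else 0) else 0) := by
  refine (Finset.sum_filter _ _).trans ((Fintype.sum_sum_type _).trans ?_)
  rw [← sum_dite_mem S (fun s => if P (Sum.inr s) then f (Sum.inr s) else 0)]

lemma sum_pair_aFV (G : MGraph) (S : Finset G.V)
    (P : (G.addLeafFinset S).V → Prop) [DecidablePred P]
    (f : (G.addLeafFinset S).V → ℕ) :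
    ∑ y ∈ Finset.univ.filter P, f y =
      ∑ v : G.V, ((if P (Sum.inl v) then f (Sum.inl v) else 0) +
        (if h : v ∈ S then (if P (Sum.inr ⟨v, h⟩) then f (Sum.inr ⟨v, h⟩) else 0) else 0)) := by
  refine (Finset.sum_filter _ _).trans ((Fintype.sum_sum_type _).trans ?_)
  rw [← sum_dite_mem S (fun s => if P (Sum.inr s) then f (Sum.inr s) else 0),
    ← Finset.sum_add_distrib]

lemma sum_split_aFE (G : MGraph) (S : Finset G.V)
    (P : (G.addLeafFinset S).E → Prop) [DecidablePred P]
    (f : (G.addLeafFinset S).E → ℕ) :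
    ∑ y ∈ Finset.univ.filter P, f y =
      (∑ e : G.E, if P (Sum.inl e) then f (Sum.inl e) else 0) +
      (∑ v : G.V, if h : v ∈ S then
        (if P (Sum.inr ⟨v, h⟩) then f (Sum.inr ⟨v, h⟩) else 0) else 0) := by
  refine (Finset.sum_filter _ _).trans ((Fintype.sum_sum_type _).trans ?_)
  rw [← sum_dite_mem S (fun s => if P (Sum.inr s) then f (Sum.inr s) else 0)]

end Sums

/-! ### Projection lemmas for the finset operations -/

section ProjLemmas

variable (G : MGraph) (S : Finset G.E)

@[simp] lemma sF_fst_inl (e : G.E) :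
    (G.subdivideFinset S).fst (Sum.inl e) = Sum.inl (G.fst e) := rfl

@[simp] lemma sF_fst_inr (s : {x // x ∈ S}) :
    (G.subdivideFinset S).fst (Sum.inr s) = Sum.inr s := rfl

@[simp] lemma sF_snd_inr (s : {x // x ∈ S}) :
    (G.subdivideFinset S).snd (Sum.inr s) = Sum.inl (G.snd s.1) := rfl

lemma sF_snd_inl_mem {e : G.E} (h : e ∈ S) :
    (G.subdivideFinset S).snd (Sum.inl e) = Sum.inr ⟨e, h⟩ := by
  show (if h2 : e ∈ S then (Sum.inr ⟨e, h2⟩ : G.V ⊕ {x // x ∈ S})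
    else Sum.inl (G.snd e)) = _
  rw [dif_pos h]

lemma sF_snd_inl_not_mem {e : G.E} (h : e ∉ S) :
    (G.subdivideFinset S).snd (Sum.inl e) = Sum.inl (G.snd e) := by
  show (if h2 : e ∈ S then (Sum.inr ⟨e, h2⟩ : G.V ⊕ {x // x ∈ S})
    else Sum.inl (G.snd e)) = _
  rw [dif_neg h]

end ProjLemmas

section ProjLemmas2

variable (G : MGraph) (SV : Finset G.V)

@[simp] lemma aF_fst_inl (e : G.E) :
    (G.addLeafFinset SV).fst (Sum.inl e) = Sum.inl (G.fst e) := rfl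
@[simp] lemma aF_fst_inr (s : {x // x ∈ SV}) :
    (G.addLeafFinset SV).fst (Sum.inr s) = Sum.inl s.1 := rfl
@[simp] lemma aF_snd_inl (e : G.E) :
    (G.addLeafFinset SV).snd (Sum.inl e) = Sum.inl (G.snd e) := rfl
@[simp] lemma aF_snd_inr (s : {x // x ∈ SV}) :
    (G.addLeafFinset SV).snd (Sum.inr s) = Sum.inr s := rfl

variable (e₀ : G.E) (v₀ : G.V)

@[simp] lemma subdiv_fst_inl (t1 : {e : G.E // e ≠ e₀}) :
    (G.subdivide e₀).fst (Sum.inl t1) = Sum.inl (G.fst t1.1) := rfl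
@[simp] lemma subdiv_snd_inl (t1 : {e : G.E // e ≠ e₀}) :
    (G.subdivide e₀).snd (Sum.inl t1) = Sum.inl (G.snd t1.1) := rfl
@[simp] lemma subdiv_fst_false :
    (G.subdivide e₀).fst (Sum.inr false) = Sum.inl (G.fst e₀) := rfl
@[simp] lemma subdiv_snd_false :
    (G.subdivide e₀).snd (Sum.inr false) = Sum.inr () := rfl
@[simp] lemma subdiv_fst_true :
    (G.subdivide e₀).fst (Sum.inr true) = Sum.inr () := rfl
@[simp] lemma subdiv_snd_true :
    (G.subdivide e₀).snd (Sum.inr true) = Sum.inl (G.snd e₀) := rfl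

@[simp] lemma addLeaf_fst_inl (e : G.E) :
    (G.addLeaf v₀).fst (Sum.inl e) = Sum.inl (G.fst e) := rfl
@[simp] lemma addLeaf_snd_inl (e : G.E) :
    (G.addLeaf v₀).snd (Sum.inl e) = Sum.inl (G.snd e) := rfl
@[simp] lemma addLeaf_fst_inr (u : Unit) :
    (G.addLeaf v₀).fst (Sum.inr u) = Sum.inl v₀ := rfl
@[simp] lemma addLeaf_snd_inr (u : Unit) :
    (G.addLeaf v₀).snd (Sum.inr u) = Sum.inr () := rfl

end ProjLemmas2

/-! ### The subdivision step for a harmonic morphism -/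

section SubdivStep

variable {G T : MGraph} (φ : FinHarm G T) (e₀ : T.E)

def subFiber : Finset G.E := Finset.univ.filter (fun e => φ.fE e = e₀)

lemma mem_subFiber {e : G.E} : e ∈ subFiber φ e₀ ↔ φ.fE e = e₀ := by
  simp [subFiber]

def subdivFV : (G.subdivideFinset (subFiber φ e₀)).V → (T.subdivide e₀).V :=
  Sum.elim (fun x => Sum.inl (φ.fV x)) (fun _ => Sum.inr ())

def subdivFE : (G.subdivideFinset (subFiber φ e₀)).E → (T.subdivide e₀).E :=
  Sum.elim
    (fun e => if h : φ.fE e = e₀ then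
        (if φ.fV (G.fst e) = T.fst e₀ then Sum.inr false else Sum.inr true)
      else Sum.inl ⟨φ.fE e, h⟩)
    (fun s => if φ.fV (G.fst s.1) = T.fst e₀ then Sum.inr true else Sum.inr false)

@[simp] lemma subdivFV_inl (x : G.V) :
    subdivFV φ e₀ (Sum.inl x) = Sum.inl (φ.fV x) := rfl
@[simp] lemma subdivFV_inr (s) : subdivFV φ e₀ (Sum.inr s) = Sum.inr () := rfl

lemma subdivFE_inl_not_mem {e : G.E} (h : φ.fE e ≠ e₀) :
    subdivFE φ e₀ (Sum.inl e) = Sum.inl ⟨φ.fE e, h⟩ := by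
  show (if h2 : φ.fE e = e₀ then
      (if φ.fV (G.fst e) = T.fst e₀ then (Sum.inr false : (T.subdivide e₀).E)
        else Sum.inr true)
    else Sum.inl ⟨φ.fE e, h2⟩) = _
  rw [dif_neg h]

lemma subdivFE_inl_aligned {e : G.E} (h : φ.fE e = e₀)
    (ha : φ.fV (G.fst e) = T.fst e₀) :
    subdivFE φ e₀ (Sum.inl e) = Sum.inr false := by
  show (if h2 : φ.fE e = e₀ then
      (if φ.fV (G.fst e) = T.fst e₀ then (Sum.inr false : (T.subdivide e₀).E)
        else Sum.inr true)
    else Sum.inl ⟨φ.fE e, h2⟩) = _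
  rw [dif_pos h, if_pos ha]

lemma subdivFE_inl_flipped {e : G.E} (h : φ.fE e = e₀)
    (ha : ¬ φ.fV (G.fst e) = T.fst e₀) :
    subdivFE φ e₀ (Sum.inl e) = Sum.inr true := by
  show (if h2 : φ.fE e = e₀ then
      (if φ.fV (G.fst e) = T.fst e₀ then (Sum.inr false : (T.subdivide e₀).E)
        else Sum.inr true)
    else Sum.inl ⟨φ.fE e, h2⟩) = _
  rw [dif_pos h, if_neg ha]

lemma subdivFE_inr_aligned {s} (ha : φ.fV (G.fst s.1) = T.fst e₀) :
    subdivFE φ e₀ (Sum.inr s) = Sum.inr true := by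
  show (if φ.fV (G.fst s.1) = T.fst e₀ then (Sum.inr true : (T.subdivide e₀).E)
    else Sum.inr false) = _
  rw [if_pos ha]

lemma subdivFE_inr_flipped {s} (ha : ¬ φ.fV (G.fst s.1) = T.fst e₀) :
    subdivFE φ e₀ (Sum.inr s) = Sum.inr false := by
  show (if φ.fV (G.fst s.1) = T.fst e₀ then (Sum.inr true : (T.subdivide e₀).E)
    else Sum.inr false) = _
  rw [if_neg ha]

lemma subdivFE_inr_ne_inl (s) (t1 : {t : T.E // t ≠ e₀}) :
    subdivFE φ e₀ (Sum.inr s) ≠ Sum.inl t1 := by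
  by_cases ha : φ.fV (G.fst s.1) = T.fst e₀
  · rw [subdivFE_inr_aligned φ e₀ ha]; exact fun hh => nomatch hh
  · rw [subdivFE_inr_flipped φ e₀ ha]; exact fun hh => nomatch hh

lemma subdivFE_inl_ne_inl_of_mem {e : G.E} (h : φ.fE e = e₀) (t1 : {t : T.E // t ≠ e₀}) :
    subdivFE φ e₀ (Sum.inl e) ≠ Sum.inl t1 := by
  by_cases ha : φ.fV (G.fst e) = T.fst e₀
  · rw [subdivFE_inl_aligned φ e₀ h ha]; exact fun hh => nomatch hh
  · rw [subdivFE_inl_flipped φ e₀ h ha]; exact fun hh => nomatch hh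

/-- Orientation of an edge over `e₀`. -/
lemma aligned_spec (hTl : T.Loopless) {e : G.E} (he : φ.fE e = e₀) :
    (φ.fV (G.fst e) = T.fst e₀ ∧ φ.fV (G.snd e) = T.snd e₀ ∧
      ¬ φ.fV (G.snd e) = T.fst e₀) ∨
    (¬ φ.fV (G.fst e) = T.fst e₀ ∧ φ.fV (G.fst e) = T.snd e₀ ∧
      φ.fV (G.snd e) = T.fst e₀) := by
  have hj := φ.ends e
  rw [he] at hj
  rcases hj with ⟨h1, h2⟩ | ⟨h1, h2⟩
  · left
    refine ⟨h1.symm, h2.symm, ?_⟩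
    rw [← h2]
    exact fun hh => hTl e₀ (hh.symm)
  · right
    refine ⟨?_, h2.symm, h1.symm⟩
    rw [← h2]
    exact fun hh => hTl e₀ (hh.symm)

/-- The subdivided harmonic morphism. -/
def FinHarm.subdivStep (hTl : T.Loopless) :
    FinHarm (G.subdivideFinset (subFiber φ e₀)) (T.subdivide e₀) where
  fV := subdivFV φ e₀
  fE := subdivFE φ e₀
  r := Sum.elim φ.r (fun s => φ.r s.1)
  r_pos := by rintro (e | s) <;> exact φ.r_pos _
  m := Sum.elim φ.m (fun s => φ.r s.1)
  m_pos := by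
    rintro (x | s)
    · exact φ.m_pos _
    · exact φ.r_pos _
  ends := by
    rintro (e | s)
    · by_cases hS : φ.fE e = e₀
      · have hmem : e ∈ subFiber φ e₀ := (mem_subFiber φ e₀).mpr hS
        rw [show (G.subdivideFinset (subFiber φ e₀)).snd (Sum.inl e) = Sum.inr ⟨e, hmem⟩
          from sF_snd_inl_mem G _ hmem]
        rcases aligned_spec φ e₀ hTl hS with ⟨h1, h2, h3⟩ | ⟨h1, h2, h3⟩
        · rw [subdivFE_inl_aligned φ e₀ hS h1]
          exact Or.inl ⟨congrArg Sum.inl h1.symm, rfl⟩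
        · rw [subdivFE_inl_flipped φ e₀ hS h1]
          exact Or.inr ⟨rfl, congrArg Sum.inl h2.symm⟩
      · have hmem : e ∉ subFiber φ e₀ := fun hh => hS ((mem_subFiber φ e₀).mp hh)
        rw [show (G.subdivideFinset (subFiber φ e₀)).snd (Sum.inl e) = Sum.inl (G.snd e)
          from sF_snd_inl_not_mem G _ hmem]
        rw [subdivFE_inl_not_mem φ e₀ hS]
        rcases φ.ends e with ⟨h1, h2⟩ | ⟨h1, h2⟩
        · exact Or.inl ⟨congrArg Sum.inl h1, congrArg Sum.inl h2⟩
        · exact Or.inr ⟨congrArg Sum.inl h1, congrArg Sum.inl h2⟩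
    · have hS : φ.fE s.1 = e₀ := (mem_subFiber φ e₀).mp s.2
      rcases aligned_spec φ e₀ hTl hS with ⟨h1, h2, h3⟩ | ⟨h1, h2, h3⟩
      · rw [subdivFE_inr_aligned φ e₀ h1]
        exact Or.inl ⟨rfl, congrArg Sum.inl h2.symm⟩
      · rw [subdivFE_inr_flipped φ e₀ h1]
        exact Or.inr ⟨congrArg Sum.inl h3.symm, rfl⟩
  harm := by
    rintro (x | s) e' hi
    · -- original vertex
      rcases e' with t1 | b
      · -- an edge of T away from e₀
        have hIncT : T.Inc t1.1 (φ.fV x) := by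
          rcases hi with h | h
          · exact Or.inl (Sum.inl.inj h)
          · exact Or.inr (Sum.inl.inj h)
        show φ.m x = _
        have hsplit := sum_pair_sFE G (subFiber φ e₀)
          (fun e2 => (G.subdivideFinset (subFiber φ e₀)).Inc e2 (Sum.inl x) ∧
            subdivFE φ e₀ e2 = Sum.inl t1)
          (Sum.elim φ.r (fun s => φ.r s.1))
        refine (φ.harm x t1.1 hIncT).trans ((Finset.sum_filter _ _).trans
          ((Finset.sum_congr rfl (fun e _ => ?_)).trans
            (hsplit.symm.trans (sum_filter_inst _ _ _ _))))
        by_cases hS : φ.fE e = e₀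
        · have hmem : e ∈ subFiber φ e₀ := (mem_subFiber φ e₀).mpr hS
          have hA : ¬ ((G.subdivideFinset (subFiber φ e₀)).Inc (Sum.inl e) (Sum.inl x) ∧
              subdivFE φ e₀ (Sum.inl e) = Sum.inl t1) :=
            fun hc => subdivFE_inl_ne_inl_of_mem φ e₀ hS t1 hc.2
          have hB : ¬ ((G.subdivideFinset (subFiber φ e₀)).Inc (Sum.inr ⟨e, hmem⟩) (Sum.inl x) ∧
              subdivFE φ e₀ (Sum.inr ⟨e, hmem⟩) = Sum.inl t1) :=
            fun hc => subdivFE_inr_ne_inl φ e₀ ⟨e, hmem⟩ t1 hc.2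
          have hC : ¬ (G.Inc e x ∧ φ.fE e = t1.1) := fun hc => t1.2 (hc.2.symm.trans hS)
          rw [if_neg hA, dif_pos hmem, if_neg hB, if_neg hC, add_zero]
        · have hmem : e ∉ subFiber φ e₀ := fun hh => hS ((mem_subFiber φ e₀).mp hh)
          have hiff : (G.Inc e x ∧ φ.fE e = t1.1) ↔
              ((G.subdivideFinset (subFiber φ e₀)).Inc (Sum.inl e) (Sum.inl x) ∧
                subdivFE φ e₀ (Sum.inl e) = Sum.inl t1) := by
            rw [subdivFE_inl_not_mem φ e₀ hS]
            constructor
            · rintro ⟨hinc, hfe⟩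
              refine ⟨?_, by erw [Sum.inl.injEq, Subtype.ext_iff]; exact hfe⟩
              rcases hinc with h | h
              · exact Or.inl (congrArg Sum.inl h)
              · exact Or.inr (by rw [sF_snd_inl_not_mem G _ hmem]; exact congrArg Sum.inl h)
            · rintro ⟨hinc, hfe⟩
              erw [Sum.inl.injEq, Subtype.ext_iff] at hfe
              refine ⟨?_, hfe⟩
              rcases hinc with h | h
              · exact Or.inl (Sum.inl.inj h)
              · rw [sF_snd_inl_not_mem G _ hmem] at h
                exact Or.inr (Sum.inl.inj h)
          rw [dif_neg hmem, add_zero]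
          exact if_congr hiff rfl rfl
      · -- a half of e₀
        have hIncT : T.Inc e₀ (φ.fV x) := by
          cases b
          · rcases hi with h | h
            · exact Or.inl (Sum.inl.inj h)
            · exact absurd h (by simp)
          · rcases hi with h | h
            · exact absurd h (by simp)
            · exact Or.inr (Sum.inl.inj h)
        show φ.m x = _
        have hsplit := sum_pair_sFE G (subFiber φ e₀)
          (fun e2 => (G.subdivideFinset (subFiber φ e₀)).Inc e2 (Sum.inl x) ∧
            subdivFE φ e₀ e2 = Sum.inr b)
          (Sum.elim φ.r (fun s => φ.r s.1))
        refine (φ.harm x e₀ hIncT).trans ((Finset.sum_filter _ _).trans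
          ((Finset.sum_congr rfl (fun e _ => ?_)).trans
            (hsplit.symm.trans (sum_filter_inst _ _ _ _))))
        by_cases hS : φ.fE e = e₀
        · have hmem : e ∈ subFiber φ e₀ := (mem_subFiber φ e₀).mpr hS
          rw [dif_pos hmem]
          rcases aligned_spec φ e₀ hTl hS with ⟨h1, h2, h3⟩ | ⟨h1, h2, h3⟩
          · -- aligned : first half ↦ false, second half ↦ true
            rw [subdivFE_inl_aligned φ e₀ hS h1, subdivFE_inr_aligned φ e₀ h1]
            cases b
            · have hfx : T.fst e₀ = φ.fV x := by
                rcases hi with h | h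
                · exact Sum.inl.inj h
                · exact absurd h (by simp)
              have hsnd : ¬ G.snd e = x := fun hh => h3 (by rw [hh, ← hfx])
              have hB : ¬ ((G.subdivideFinset (subFiber φ e₀)).Inc (Sum.inr ⟨e, hmem⟩)
                  (Sum.inl x) ∧ (Sum.inr true : (T.subdivide e₀).E) = Sum.inr false) :=
                fun hc => Bool.noConfusion (Sum.inr.inj hc.2)
              by_cases hfst : G.fst e = x
              · have hL : G.Inc e x ∧ φ.fE e = e₀ := ⟨Or.inl hfst, hS⟩
                have hA : (G.subdivideFinset (subFiber φ e₀)).Inc (Sum.inl e)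
                    (Sum.inl x) ∧ (Sum.inr false : (T.subdivide e₀).E) = Sum.inr false :=
                  ⟨Or.inl (congrArg Sum.inl hfst), rfl⟩
                erw [if_pos hL, if_pos hA, if_neg hB, add_zero]
                rfl
              · have hL : ¬ (G.Inc e x ∧ φ.fE e = e₀) := fun hc => by
                  rcases hc.1 with h | h
                  · exact hfst h
                  · exact hsnd h
                have hA : ¬ ((G.subdivideFinset (subFiber φ e₀)).Inc (Sum.inl e)
                    (Sum.inl x) ∧ (Sum.inr false : (T.subdivide e₀).E) = Sum.inr false) :=
                  fun hc => by
                    rcases hc.1 with h | h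
                    · exact hfst (Sum.inl.inj h)
                    · rw [sF_snd_inl_mem G _ hmem] at h
                      exact nomatch h
                erw [if_neg hL, if_neg hA, if_neg hB, add_zero]
            · have hfx : T.snd e₀ = φ.fV x := by
                rcases hi with h | h
                · exact absurd h (by simp)
                · exact Sum.inl.inj h
              have hfst : ¬ G.fst e = x := fun hh => by
                rw [← hh] at hfx
                exact hTl e₀ (h1.symm.trans hfx.symm)
              have hA : ¬ ((G.subdivideFinset (subFiber φ e₀)).Inc (Sum.inl e)
                  (Sum.inl x) ∧ (Sum.inr false : (T.subdivide e₀).E) = Sum.inr true) :=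
                fun hc => Bool.noConfusion (Sum.inr.inj hc.2)
              by_cases hsnd : G.snd e = x
              · have hL : G.Inc e x ∧ φ.fE e = e₀ := ⟨Or.inr hsnd, hS⟩
                have hB : (G.subdivideFinset (subFiber φ e₀)).Inc (Sum.inr ⟨e, hmem⟩)
                    (Sum.inl x) ∧ (Sum.inr true : (T.subdivide e₀).E) = Sum.inr true :=
                  ⟨Or.inr (congrArg Sum.inl hsnd), rfl⟩
                erw [if_pos hL, if_pos hB, if_neg hA, zero_add]
                rfl
              · have hL : ¬ (G.Inc e x ∧ φ.fE e = e₀) := fun hc => by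
                  rcases hc.1 with h | h
                  · exact hfst h
                  · exact hsnd h
                have hB : ¬ ((G.subdivideFinset (subFiber φ e₀)).Inc (Sum.inr ⟨e, hmem⟩)
                    (Sum.inl x) ∧ (Sum.inr true : (T.subdivide e₀).E) = Sum.inr true) :=
                  fun hc => by
                    rcases hc.1 with h | h
                    · exact nomatch h
                    · exact hsnd (Sum.inl.inj h)
                erw [if_neg hL, if_neg hA, if_neg hB, add_zero]
          · -- flipped : first half ↦ true, second half ↦ false
            rw [subdivFE_inl_flipped φ e₀ hS h1, subdivFE_inr_flipped φ e₀ h1]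
            cases b
            · have hfx : T.fst e₀ = φ.fV x := by
                rcases hi with h | h
                · exact Sum.inl.inj h
                · exact absurd h (by simp)
              have hfst : ¬ G.fst e = x := fun hh => h1 (by rw [hh, ← hfx])
              have hA : ¬ ((G.subdivideFinset (subFiber φ e₀)).Inc (Sum.inl e)
                  (Sum.inl x) ∧ (Sum.inr true : (T.subdivide e₀).E) = Sum.inr false) :=
                fun hc => Bool.noConfusion (Sum.inr.inj hc.2)
              by_cases hsnd : G.snd e = x
              · have hL : G.Inc e x ∧ φ.fE e = e₀ := ⟨Or.inr hsnd, hS⟩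
                have hB : (G.subdivideFinset (subFiber φ e₀)).Inc (Sum.inr ⟨e, hmem⟩)
                    (Sum.inl x) ∧ (Sum.inr false : (T.subdivide e₀).E) = Sum.inr false :=
                  ⟨Or.inr (congrArg Sum.inl hsnd), rfl⟩
                erw [if_pos hL, if_pos hB, if_neg hA, zero_add]
                rfl
              · have hL : ¬ (G.Inc e x ∧ φ.fE e = e₀) := fun hc => by
                  rcases hc.1 with h | h
                  · exact hfst h
                  · exact hsnd h
                have hB : ¬ ((G.subdivideFinset (subFiber φ e₀)).Inc (Sum.inr ⟨e, hmem⟩)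
                    (Sum.inl x) ∧ (Sum.inr false : (T.subdivide e₀).E) = Sum.inr false) :=
                  fun hc => by
                    rcases hc.1 with h | h
                    · exact nomatch h
                    · exact hsnd (Sum.inl.inj h)
                erw [if_neg hL, if_neg hA, if_neg hB, add_zero]
            · have hfx : T.snd e₀ = φ.fV x := by
                rcases hi with h | h
                · exact absurd h (by simp)
                · exact Sum.inl.inj h
              have hsnd : ¬ G.snd e = x := fun hh => by
                rw [← hh] at hfx
                exact hTl e₀ (hfx.trans h3).symm
              have hB : ¬ ((G.subdivideFinset (subFiber φ e₀)).Inc (Sum.inr ⟨e, hmem⟩)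
                  (Sum.inl x) ∧ (Sum.inr false : (T.subdivide e₀).E) = Sum.inr true) :=
                fun hc => Bool.noConfusion (Sum.inr.inj hc.2)
              by_cases hfst : G.fst e = x
              · have hL : G.Inc e x ∧ φ.fE e = e₀ := ⟨Or.inl hfst, hS⟩
                have hA : (G.subdivideFinset (subFiber φ e₀)).Inc (Sum.inl e)
                    (Sum.inl x) ∧ (Sum.inr true : (T.subdivide e₀).E) = Sum.inr true :=
                  ⟨Or.inl (congrArg Sum.inl hfst), rfl⟩
                erw [if_pos hL, if_pos hA, if_neg hB, add_zero]
                rfl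
              · have hL : ¬ (G.Inc e x ∧ φ.fE e = e₀) := fun hc => by
                  rcases hc.1 with h | h
                  · exact hfst h
                  · exact hsnd h
                have hA : ¬ ((G.subdivideFinset (subFiber φ e₀)).Inc (Sum.inl e)
                    (Sum.inl x) ∧ (Sum.inr true : (T.subdivide e₀).E) = Sum.inr true) :=
                  fun hc => by
                    rcases hc.1 with h | h
                    · exact hfst (Sum.inl.inj h)
                    · rw [sF_snd_inl_mem G _ hmem] at h
                      exact nomatch h
                erw [if_neg hL, if_neg hA, if_neg hB, add_zero]
        · -- e not over e₀ contributes to neither side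
          have hmem : e ∉ subFiber φ e₀ := fun hh => hS ((mem_subFiber φ e₀).mp hh)
          have hL : ¬ (G.Inc e x ∧ φ.fE e = e₀) := fun hc => hS hc.2
          have hA : ¬ ((G.subdivideFinset (subFiber φ e₀)).Inc (Sum.inl e)
              (Sum.inl x) ∧ subdivFE φ e₀ (Sum.inl e) = Sum.inr b) := fun hc => by
            have h := hc.2
            rw [subdivFE_inl_not_mem φ e₀ hS] at h
            exact nomatch h
          rw [dif_neg hmem, if_neg hL, if_neg hA, add_zero]
    · -- midpoint vertex of an edge s over e₀
      have hS : φ.fE s.1 = e₀ := (mem_subFiber φ e₀).mp s.2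
      rcases e' with t1 | b
      · rcases hi with h | h <;> exact absurd h (by simp)
      · show φ.r s.1 = _
        -- the filter is a singleton
        have hmain : ∀ edge : (G.subdivideFinset (subFiber φ e₀)).E,
            ((Sum.elim φ.r (fun s => φ.r s.1) : _ → ℕ) edge = φ.r s.1) →
            (Finset.univ.filter fun e2 =>
              (G.subdivideFinset (subFiber φ e₀)).Inc e2 (Sum.inr s) ∧
                subdivFE φ e₀ e2 = Sum.inr b) = {edge} →
            φ.r s.1 = ∑ e2 ∈ Finset.univ.filter (fun e2 =>
              (G.subdivideFinset (subFiber φ e₀)).Inc e2 (Sum.inr s) ∧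
                subdivFE φ e₀ e2 = Sum.inr b),
              (Sum.elim φ.r (fun s => φ.r s.1) : _ → ℕ) e2 := by
          intro edge hr hfil
          rw [hfil, Finset.sum_singleton, hr]
        have hIncInl : (G.subdivideFinset (subFiber φ e₀)).Inc (Sum.inl s.1) (Sum.inr s) := by
          right
          rw [sF_snd_inl_mem G _ s.2]
        have hIncInr : (G.subdivideFinset (subFiber φ e₀)).Inc (Sum.inr s) (Sum.inr s) :=
          Or.inl rfl
        have honlyInl : ∀ e : G.E,
            (G.subdivideFinset (subFiber φ e₀)).Inc (Sum.inl e) (Sum.inr s) → e = s.1 := by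
          rintro e (h | h)
          · exact absurd h (by simp)
          · by_cases hmem : e ∈ subFiber φ e₀
            · rw [sF_snd_inl_mem G _ hmem] at h
              exact congrArg Subtype.val (Sum.inr.inj h)
            · rw [sF_snd_inl_not_mem G _ hmem] at h
              exact absurd h (by simp)
        have honlyInr : ∀ s' : {x // x ∈ subFiber φ e₀},
            (G.subdivideFinset (subFiber φ e₀)).Inc (Sum.inr s') (Sum.inr s) → s' = s := by
          rintro s' (h | h)
          · exact Sum.inr.inj h
          · exact absurd h (by simp)
        rcases aligned_spec φ e₀ hTl hS with ⟨h1, h2, h3⟩ | ⟨h1, h2, h3⟩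
        · -- aligned: first half ↦ false, second half ↦ true
          cases b
          · refine hmain (Sum.inl s.1) rfl ?_
            apply Finset.ext
            intro e2
            simp only [Finset.mem_filter, Finset.mem_univ, true_and, Finset.mem_singleton]
            constructor
            · rintro ⟨hinc, hfe⟩
              rcases e2 with e | s'
              · rw [honlyInl e hinc]
              · cases honlyInr s' hinc
                rw [subdivFE_inr_aligned φ e₀ h1] at hfe
                exact absurd (Sum.inr.inj hfe) (by simp)
            · rintro rfl
              exact ⟨hIncInl, subdivFE_inl_aligned φ e₀ hS h1⟩
          · refine hmain (Sum.inr s) rfl ?_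
            apply Finset.ext
            intro e2
            simp only [Finset.mem_filter, Finset.mem_univ, true_and, Finset.mem_singleton]
            constructor
            · rintro ⟨hinc, hfe⟩
              rcases e2 with e | s'
              · cases honlyInl e hinc
                rw [subdivFE_inl_aligned φ e₀ hS h1] at hfe
                exact absurd (Sum.inr.inj hfe) (by simp)
              · rw [honlyInr s' hinc]
            · rintro rfl
              exact ⟨hIncInr, subdivFE_inr_aligned φ e₀ h1⟩
        · -- flipped: first half ↦ true, second half ↦ false
          cases b
          · refine hmain (Sum.inr s) rfl ?_
            apply Finset.ext
            intro e2
            simp only [Finset.mem_filter, Finset.mem_univ, true_and, Finset.mem_singleton]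
            constructor
            · rintro ⟨hinc, hfe⟩
              rcases e2 with e | s'
              · cases honlyInl e hinc
                rw [subdivFE_inl_flipped φ e₀ hS h1] at hfe
                exact absurd (Sum.inr.inj hfe) (by simp)
              · rw [honlyInr s' hinc]
            · rintro rfl
              exact ⟨hIncInr, subdivFE_inr_flipped φ e₀ h1⟩
          · refine hmain (Sum.inl s.1) rfl ?_
            apply Finset.ext
            intro e2
            simp only [Finset.mem_filter, Finset.mem_univ, true_and, Finset.mem_singleton]
            constructor
            · rintro ⟨hinc, hfe⟩
              rcases e2 with e | s'
              · rw [honlyInl e hinc]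
              · cases honlyInr s' hinc
                rw [subdivFE_inr_flipped φ e₀ h1] at hfe
                exact absurd (Sum.inr.inj hfe) (by simp)
            · rintro rfl
              exact ⟨hIncInl, subdivFE_inl_flipped φ e₀ hS h1⟩

end SubdivStep

end MGraph

namespace MGraph

section SubdivStepProps

variable {G T : MGraph} (φ : FinHarm G T) (e₀ : T.E)

lemma FinHarm.subdivStep_isDegree (hTl : T.Loopless) {d : ℕ} (hd : φ.IsDegree d) :
    (φ.subdivStep e₀ hTl).IsDegree d := by
  obtain ⟨hdV, hdE⟩ := hd
  constructor
  · rintro (w | ⟨⟩)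
    · have hsplit := @sum_split_sFV G (subFiber φ e₀)
        (fun v2 => subdivFV φ e₀ v2 = Sum.inl w)
        (fun _ => Classical.propDecidable _)
        (Sum.elim φ.m (fun s => φ.r s.1))
      refine hsplit.trans ?_
      have hz : (∑ e : G.E, if h : e ∈ subFiber φ e₀ then
          (if subdivFV φ e₀ (Sum.inr ⟨e, h⟩) = Sum.inl w then
            Sum.elim φ.m (fun s : {x // x ∈ subFiber φ e₀} => φ.r s.1) (Sum.inr ⟨e, h⟩)
          else 0) else 0) = 0 :=
        Finset.sum_eq_zero (fun e _ => by
          by_cases h : e ∈ subFiber φ e₀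
          · rw [dif_pos h, @if_neg _ _ (fun hc => nomatch hc)]
          · rw [dif_neg h])
      rw [hz, add_zero]
      refine Eq.trans (Finset.sum_congr rfl (fun v _ => ?_))
        ((Finset.sum_filter _ _).symm.trans (hdV w))
      refine if_congr ?_ rfl rfl
      erw [subdivFV_inl, Sum.inl.injEq]
    · have hsplit := @sum_split_sFV G (subFiber φ e₀)
        (fun v2 => subdivFV φ e₀ v2 = Sum.inr ())
        (fun _ => Classical.propDecidable _)
        (Sum.elim φ.m (fun s => φ.r s.1))
      refine hsplit.trans ?_
      have hz : (∑ v : G.V, if subdivFV φ e₀ (Sum.inl v) = Sum.inr () then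
          Sum.elim φ.m (fun s : {x // x ∈ subFiber φ e₀} => φ.r s.1) (Sum.inl v) else 0) = 0 :=
        Finset.sum_eq_zero (fun v _ => by
          rw [@if_neg _ _ (fun hc => nomatch hc)])
      rw [hz, zero_add]
      refine Eq.trans (Finset.sum_congr rfl (fun e _ => ?_))
        ((Finset.sum_filter _ _).symm.trans (hdE e₀))
      by_cases h : e ∈ subFiber φ e₀
      · rw [dif_pos h, @if_pos _ _ (show subdivFV φ e₀ (Sum.inr ⟨e, h⟩) = Sum.inr () from rfl),
          @if_pos _ _ ((mem_subFiber φ e₀).mp h)]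
        rfl
      · rw [dif_neg h, @if_neg _ _ (fun hc => h ((mem_subFiber φ e₀).mpr hc))]
  · rintro (t1 | b)
    · have hsplit := @sum_pair_sFE G (subFiber φ e₀)
        (fun e2 => subdivFE φ e₀ e2 = Sum.inl t1)
        (fun _ => Classical.propDecidable _)
        (Sum.elim φ.r (fun s => φ.r s.1))
      refine hsplit.trans (Eq.trans (Finset.sum_congr rfl (fun e _ => ?_))
        ((Finset.sum_filter _ _).symm.trans (hdE t1.1)))
      by_cases hS : φ.fE e = e₀
      · have hmem := (mem_subFiber φ e₀).mpr hS
        rw [@if_neg _ _ (subdivFE_inl_ne_inl_of_mem φ e₀ hS t1), dif_pos hmem,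
          @if_neg _ _ (subdivFE_inr_ne_inl φ e₀ ⟨e, hmem⟩ t1),
          @if_neg _ _ (fun hc : φ.fE e = t1.1 => t1.2 (hc.symm.trans hS)), add_zero]
      · have hmem : e ∉ subFiber φ e₀ := fun hh => hS ((mem_subFiber φ e₀).mp hh)
        rw [dif_neg hmem, add_zero]
        refine if_congr ?_ rfl rfl
        erw [subdivFE_inl_not_mem φ e₀ hS, Sum.inl.injEq, Subtype.ext_iff]
    · have hsplit := @sum_pair_sFE G (subFiber φ e₀)
        (fun e2 => subdivFE φ e₀ e2 = Sum.inr b)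
        (fun _ => Classical.propDecidable _)
        (Sum.elim φ.r (fun s => φ.r s.1))
      refine hsplit.trans (Eq.trans (Finset.sum_congr rfl (fun e _ => ?_))
        ((Finset.sum_filter _ _).symm.trans (hdE e₀)))
      by_cases hS : φ.fE e = e₀
      · have hmem := (mem_subFiber φ e₀).mpr hS
        rw [@if_pos _ _ hS]
        rw [dif_pos hmem]
        by_cases ha : φ.fV (G.fst e) = T.fst e₀
        · have e1 := subdivFE_inl_aligned φ e₀ hS ha
          have e2 := subdivFE_inr_aligned φ e₀ (s := ⟨e, hmem⟩) ha
          cases b <;> simp [e1, e2] <;> erw [Sum.inr.injEq, Sum.inr.injEq] <;> simp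
        · have e1 := subdivFE_inl_flipped φ e₀ hS ha
          have e2 := subdivFE_inr_flipped φ e₀ (s := ⟨e, hmem⟩) ha
          cases b <;> simp [e1, e2] <;> erw [Sum.inr.injEq, Sum.inr.injEq] <;> simp
      · have hmem : e ∉ subFiber φ e₀ := fun hh => hS ((mem_subFiber φ e₀).mp hh)
        have e1 := subdivFE_inl_not_mem φ e₀ hS
        rw [dif_neg hmem, add_zero, @if_neg _ _ hS]
        simp [e1]

lemma FinHarm.subdivStep_isMorRef (hTl : T.Loopless) :
    IsMorRefinement φ (φ.subdivStep e₀ hTl) Sum.inl (G.pSub (subFiber φ e₀))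
      Sum.inl (fun t2 => Sum.elim (fun t1 : {t : T.E // t ≠ e₀} => some t1.1)
        (fun _ : Bool => some e₀) t2) := by
  refine ⟨fun v => rfl, ?_, ?_⟩
  · intro e
    ext t2
    simp only [Set.mem_image, Set.mem_setOf_eq,
      show (φ.subdivStep e₀ hTl).fE = subdivFE φ e₀ from rfl]
    constructor
    · rintro ⟨e2, hp, rfl⟩
      rcases e2 with e' | s
      · cases Option.some.inj hp
        by_cases hS : φ.fE e = e₀
        · by_cases ha : φ.fV (G.fst e) = T.fst e₀
          · rw [subdivFE_inl_aligned φ e₀ hS ha]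
            exact congrArg some hS.symm
          · rw [subdivFE_inl_flipped φ e₀ hS ha]
            exact congrArg some hS.symm
        · rw [subdivFE_inl_not_mem φ e₀ hS]
          rfl
      · cases Option.some.inj hp
        have hS : φ.fE s.1 = e₀ := (mem_subFiber φ e₀).mp s.2
        by_cases ha : φ.fV (G.fst s.1) = T.fst e₀
        · rw [subdivFE_inr_aligned φ e₀ ha]
          exact congrArg some hS.symm
        · rw [subdivFE_inr_flipped φ e₀ ha]
          exact congrArg some hS.symm
    · intro ht
      rcases t2 with t1 | b
      · have heq : t1.1 = φ.fE e := Option.some.inj ht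
        have hS : φ.fE e ≠ e₀ := by rw [← heq]; exact t1.2
        refine ⟨Sum.inl e, rfl, ?_⟩
        rw [subdivFE_inl_not_mem φ e₀ hS]
        exact congrArg Sum.inl (Subtype.ext heq.symm)
      · have hS : φ.fE e = e₀ := (Option.some.inj ht).symm
        have hmem : e ∈ subFiber φ e₀ := (mem_subFiber φ e₀).mpr hS
        by_cases ha : φ.fV (G.fst e) = T.fst e₀
        · cases b
          · exact ⟨Sum.inl e, rfl, subdivFE_inl_aligned φ e₀ hS ha⟩
          · exact ⟨Sum.inr ⟨e, hmem⟩, rfl, subdivFE_inr_aligned φ e₀ ha⟩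
        · cases b
          · exact ⟨Sum.inr ⟨e, hmem⟩, rfl, subdivFE_inr_flipped φ e₀ ha⟩
          · exact ⟨Sum.inl e, rfl, subdivFE_inl_flipped φ e₀ hS ha⟩
  · rintro (e' | s) e hp
    · cases Option.some.inj hp; rfl
    · cases Option.some.inj hp; rfl

lemma IsMorRefinement.congr_maps {G T G' T' : MGraph} {φ : FinHarm G T} {φ' : FinHarm G' T'}
    {ιG ιG' : G.V → G'.V} {pG pG' : G'.E → Option G.E}
    {ιT ιT' : T.V → T'.V} {pT pT' : T'.E → Option T.E}
    (h : IsMorRefinement φ φ' ιG pG ιT pT)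
    (h1 : ∀ v, ιG v = ιG' v) (h2 : ∀ e, pG e = pG' e)
    (h3 : ∀ v, ιT v = ιT' v) (h4 : ∀ e, pT e = pT' e) :
    IsMorRefinement φ φ' ιG' pG' ιT' pT' := by
  have e1 : ιG = ιG' := funext h1
  have e2 : pG = pG' := funext h2
  have e3 : ιT = ιT' := funext h3
  have e4 : pT = pT' := funext h4
  rw [← e1, ← e2, ← e3, ← e4]
  exact h

end SubdivStepProps

end MGraph

namespace MGraph

section LeafStep

variable {G T : MGraph} (φ : FinHarm G T) (v₀ : T.V)

def leafFiber : Finset G.V := Finset.univ.filter (fun v => φ.fV v = v₀)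

lemma mem_leafFiber {v : G.V} : v ∈ leafFiber φ v₀ ↔ φ.fV v = v₀ := by
  simp [leafFiber]

def leafFV : (G.addLeafFinset (leafFiber φ v₀)).V → (T.addLeaf v₀).V :=
  Sum.elim (fun x => Sum.inl (φ.fV x)) (fun _ => Sum.inr ())

def leafFE : (G.addLeafFinset (leafFiber φ v₀)).E → (T.addLeaf v₀).E :=
  Sum.elim (fun e => Sum.inl (φ.fE e)) (fun _ => Sum.inr ())

@[simp] lemma leafFV_inl (x : G.V) : leafFV φ v₀ (Sum.inl x) = Sum.inl (φ.fV x) := rfl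
@[simp] lemma leafFV_inr (s) : leafFV φ v₀ (Sum.inr s) = Sum.inr () := rfl
@[simp] lemma leafFE_inl (e : G.E) : leafFE φ v₀ (Sum.inl e) = Sum.inl (φ.fE e) := rfl
@[simp] lemma leafFE_inr (s) : leafFE φ v₀ (Sum.inr s) = Sum.inr () := rfl

/-- The harmonic morphism after adding leaves over `v₀`. -/
def FinHarm.leafStep : FinHarm (G.addLeafFinset (leafFiber φ v₀)) (T.addLeaf v₀) where
  fV := leafFV φ v₀
  fE := leafFE φ v₀
  r := Sum.elim φ.r (fun s => φ.m s.1)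
  r_pos := by
    rintro (e | s)
    · exact φ.r_pos e
    · exact φ.m_pos s.1
  ends := by
    rintro (e | s)
    · rcases φ.ends e with ⟨h1, h2⟩ | ⟨h1, h2⟩
      · exact Or.inl ⟨congrArg Sum.inl h1, congrArg Sum.inl h2⟩
      · exact Or.inr ⟨congrArg Sum.inl h1, congrArg Sum.inl h2⟩
    · exact Or.inl ⟨congrArg Sum.inl ((mem_leafFiber φ v₀).mp s.2).symm, rfl⟩
  m := Sum.elim φ.m (fun s => φ.m s.1)
  m_pos := by
    rintro (x | s)
    · exact φ.m_pos x
    · exact φ.m_pos s.1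
  harm := by
    rintro (x | s) e' hi
    · rcases e' with t | u
      · have hIncT : T.Inc t (φ.fV x) := by
          rcases hi with h | h
          · exact Or.inl (Sum.inl.inj h)
          · exact Or.inr (Sum.inl.inj h)
        show φ.m x = _
        have hsplit := sum_split_aFE G (leafFiber φ v₀)
          (fun e2 => (G.addLeafFinset (leafFiber φ v₀)).Inc e2 (Sum.inl x) ∧
            leafFE φ v₀ e2 = Sum.inl t)
          (Sum.elim φ.r (fun s => φ.m s.1))
        have hz : (∑ v : G.V, if h : v ∈ leafFiber φ v₀ then
            (if (G.addLeafFinset (leafFiber φ v₀)).Inc (Sum.inr ⟨v, h⟩) (Sum.inl x) ∧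
                leafFE φ v₀ (Sum.inr ⟨v, h⟩) = Sum.inl t then
              Sum.elim φ.r (fun s : {y // y ∈ leafFiber φ v₀} => φ.m s.1) (Sum.inr ⟨v, h⟩)
            else 0) else 0) = 0 :=
          Finset.sum_eq_zero fun v _ => by
            by_cases h : v ∈ leafFiber φ v₀
            · rw [dif_pos h, if_neg (fun hc => nomatch hc.2)]
            · rw [dif_neg h]
        refine (φ.harm x t hIncT).trans ((Finset.sum_filter _ _).trans
          ((Finset.sum_congr rfl (fun e _ => ?_)).trans
            ((by rw [hz, add_zero] :
              (∑ e : G.E, if (G.addLeafFinset (leafFiber φ v₀)).Inc (Sum.inl e) (Sum.inl x) ∧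
                  leafFE φ v₀ (Sum.inl e) = Sum.inl t then
                Sum.elim φ.r (fun s : {y // y ∈ leafFiber φ v₀} => φ.m s.1) (Sum.inl e)
              else 0) =
              (∑ e : G.E, if (G.addLeafFinset (leafFiber φ v₀)).Inc (Sum.inl e) (Sum.inl x) ∧
                  leafFE φ v₀ (Sum.inl e) = Sum.inl t then
                Sum.elim φ.r (fun s : {y // y ∈ leafFiber φ v₀} => φ.m s.1) (Sum.inl e)
              else 0) +
              (∑ v : G.V, if h : v ∈ leafFiber φ v₀ then
                (if (G.addLeafFinset (leafFiber φ v₀)).Inc (Sum.inr ⟨v, h⟩) (Sum.inl x) ∧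
                    leafFE φ v₀ (Sum.inr ⟨v, h⟩) = Sum.inl t then
                  Sum.elim φ.r (fun s : {y // y ∈ leafFiber φ v₀} => φ.m s.1) (Sum.inr ⟨v, h⟩)
                else 0) else 0)).trans hsplit.symm)))
        refine if_congr ?_ rfl rfl
        constructor
        · rintro ⟨hinc, hfe⟩
          refine ⟨?_, congrArg Sum.inl hfe⟩
          rcases hinc with h | h
          · exact Or.inl (congrArg Sum.inl h)
          · exact Or.inr (congrArg Sum.inl h)
        · rintro ⟨hinc, hfe⟩
          refine ⟨?_, Sum.inl.inj hfe⟩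
          rcases hinc with h | h
          · exact Or.inl (Sum.inl.inj h)
          · exact Or.inr (Sum.inl.inj h)
      · -- the leaf edge at v₀
        have hx : φ.fV x = v₀ := by
          rcases hi with h | h
          · exact (Sum.inl.inj h).symm
          · exact absurd h (by simp)
        have hmem : x ∈ leafFiber φ v₀ := (mem_leafFiber φ v₀).mpr hx
        cases u
        have hfil : Finset.univ.filter (fun e2 =>
            (G.addLeafFinset (leafFiber φ v₀)).Inc e2 (Sum.inl x) ∧
              leafFE φ v₀ e2 = Sum.inr ()) = {Sum.inr ⟨x, hmem⟩} := by
          apply Finset.ext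
          intro e2
          simp only [Finset.mem_filter, Finset.mem_univ, true_and, Finset.mem_singleton]
          constructor
          · rintro ⟨hinc, hfe⟩
            rcases e2 with e | s'
            · exact absurd hfe (by simp)
            · rcases hinc with h | h
              · exact congrArg Sum.inr (Subtype.ext (Sum.inl.inj h))
              · exact absurd h (by simp)
          · rintro rfl
            exact ⟨Or.inl rfl, rfl⟩
        show φ.m x = _
        rw [hfil, Finset.sum_singleton]
        rfl
    · rcases e' with t | u
      · rcases hi with h | h <;> exact absurd h (by simp)
      · cases u
        have hfil : Finset.univ.filter (fun e2 =>
            (G.addLeafFinset (leafFiber φ v₀)).Inc e2 (Sum.inr s) ∧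
              leafFE φ v₀ e2 = Sum.inr ()) = {Sum.inr s} := by
          apply Finset.ext
          intro e2
          simp only [Finset.mem_filter, Finset.mem_univ, true_and, Finset.mem_singleton]
          constructor
          · rintro ⟨hinc, hfe⟩
            rcases e2 with e | s'
            · rcases hinc with h | h <;> exact absurd h (by simp)
            · rcases hinc with h | h
              · exact absurd h (by simp)
              · exact congrArg Sum.inr (Sum.inr.inj h)
          · rintro rfl
            exact ⟨Or.inr rfl, rfl⟩
        show φ.m s.1 = _
        rw [hfil, Finset.sum_singleton]
        rfl

lemma FinHarm.leafStep_isDegree {d : ℕ} (hd : φ.IsDegree d) :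
    (φ.leafStep v₀).IsDegree d := by
  obtain ⟨hdV, hdE⟩ := hd
  constructor
  · rintro (w | ⟨⟩)
    · have hsplit := @sum_pair_aFV G (leafFiber φ v₀)
        (fun v2 => leafFV φ v₀ v2 = Sum.inl w)
        (fun _ => Classical.propDecidable _)
        (Sum.elim φ.m (fun s => φ.m s.1))
      refine hsplit.trans (Eq.trans (Finset.sum_congr rfl (fun v _ => ?_))
        ((Finset.sum_filter _ _).symm.trans (hdV w)))
      by_cases h : v ∈ leafFiber φ v₀
      · have hB : ¬ (leafFV φ v₀ (Sum.inr ⟨v, h⟩) = Sum.inl w) := fun hc => nomatch hc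
        rw [dif_pos h, if_neg hB, add_zero]
        exact if_congr ⟨fun hh => Sum.inl.inj hh, fun hh => congrArg Sum.inl hh⟩ rfl rfl
      · rw [dif_neg h, add_zero]
        exact if_congr ⟨fun hh => Sum.inl.inj hh, fun hh => congrArg Sum.inl hh⟩ rfl rfl
    · have hsplit := @sum_pair_aFV G (leafFiber φ v₀)
        (fun v2 => leafFV φ v₀ v2 = Sum.inr ())
        (fun _ => Classical.propDecidable _)
        (Sum.elim φ.m (fun s => φ.m s.1))
      refine hsplit.trans (Eq.trans (Finset.sum_congr rfl (fun v _ => ?_))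
        ((Finset.sum_filter _ _).symm.trans (hdV v₀)))
      have hA : ¬ (leafFV φ v₀ (Sum.inl v) = Sum.inr ()) := fun hc => nomatch hc
      by_cases h : v ∈ leafFiber φ v₀
      · have hB : leafFV φ v₀ (Sum.inr ⟨v, h⟩) = Sum.inr () := rfl
        rw [if_neg hA, dif_pos h, if_pos hB, zero_add,
          @if_pos _ _ ((mem_leafFiber φ v₀).mp h)]
        rfl
      · rw [if_neg hA, dif_neg h,
          @if_neg _ _ (fun hc => h ((mem_leafFiber φ v₀).mpr hc)), zero_add]
  · rintro (t | ⟨⟩)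
    · have hsplit := @sum_split_aFE G (leafFiber φ v₀)
        (fun e2 => leafFE φ v₀ e2 = Sum.inl t)
        (fun _ => Classical.propDecidable _)
        (Sum.elim φ.r (fun s => φ.m s.1))
      refine hsplit.trans ?_
      have hz : (∑ v : G.V, if h : v ∈ leafFiber φ v₀ then
          (if leafFE φ v₀ (Sum.inr ⟨v, h⟩) = Sum.inl t then
            Sum.elim φ.r (fun s : {y // y ∈ leafFiber φ v₀} => φ.m s.1) (Sum.inr ⟨v, h⟩)
          else 0) else 0) = 0 :=
        Finset.sum_eq_zero fun v _ => by
          by_cases h : v ∈ leafFiber φ v₀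
          · rw [dif_pos h, @if_neg _ _ (fun hc => nomatch hc)]
          · rw [dif_neg h]
      rw [hz, add_zero]
      refine Eq.trans (Finset.sum_congr rfl (fun e _ => ?_))
        ((Finset.sum_filter _ _).symm.trans (hdE t))
      exact if_congr ⟨fun hh => Sum.inl.inj hh, fun hh => congrArg Sum.inl hh⟩ rfl rfl
    · have hsplit := @sum_split_aFE G (leafFiber φ v₀)
        (fun e2 => leafFE φ v₀ e2 = Sum.inr ())
        (fun _ => Classical.propDecidable _)
        (Sum.elim φ.r (fun s => φ.m s.1))
      refine hsplit.trans ?_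
      have hz : (∑ e : G.E, if leafFE φ v₀ (Sum.inl e) = Sum.inr () then
          Sum.elim φ.r (fun s : {y // y ∈ leafFiber φ v₀} => φ.m s.1) (Sum.inl e)
        else 0) = 0 :=
        Finset.sum_eq_zero fun e _ => by
          rw [@if_neg _ _ (fun hc => nomatch hc)]
      rw [hz, zero_add]
      refine Eq.trans (Finset.sum_congr rfl (fun v _ => ?_))
        ((Finset.sum_filter _ _).symm.trans (hdV v₀))
      by_cases h : v ∈ leafFiber φ v₀
      · have hB : leafFE φ v₀ (Sum.inr ⟨v, h⟩) = Sum.inr () := rfl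
        rw [dif_pos h, if_pos hB, @if_pos _ _ ((mem_leafFiber φ v₀).mp h)]
        rfl
      · rw [dif_neg h, @if_neg _ _ (fun hc => h ((mem_leafFiber φ v₀).mpr hc))]

lemma FinHarm.leafStep_isMorRef :
    IsMorRefinement φ (φ.leafStep v₀) Sum.inl (G.pLeaf (leafFiber φ v₀))
      Sum.inl (fun t2 => Sum.elim (fun t : T.E => some t) (fun _ : Unit => none) t2) := by
  refine ⟨fun v => rfl, ?_, ?_⟩
  · intro e
    ext t2
    simp only [Set.mem_image, Set.mem_setOf_eq,
      show (φ.leafStep v₀).fE = leafFE φ v₀ from rfl]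
    constructor
    · rintro ⟨e2, hp, rfl⟩
      rcases e2 with e' | s
      · cases Option.some.inj hp
        rfl
      · exact absurd hp (by simp [pLeaf])
    · intro ht
      rcases t2 with t | u
      · have heq : t = φ.fE e := Option.some.inj ht
        exact ⟨Sum.inl e, rfl, congrArg Sum.inl heq.symm⟩
      · exact absurd ht (by simp)
  · rintro (e' | s) e hp
    · cases Option.some.inj hp; rfl
    · exact absurd hp (by simp [pLeaf])

end LeafStep

end MGraph

namespace MGraph

section MainLemmas

lemma Refines.isoPre {A A' B : MGraph} (ψ : Iso A A') {ι : A.V → B.V}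
    {p : B.E → Option A.E} (h : Refines A B ι p) :
    Refines A' B (fun v => ι (ψ.eV.symm v)) (fun e => (p e).map (fun a => ψ.eE a)) := by
  induction h with
  | refl =>
      exact ((Refines.refl A').iso ψ.symm).congr_maps (fun v => rfl) (fun e => rfl)
  | @subdiv B' ι' p' h e₀ ih =>
      refine (Refines.subdiv ih e₀).congr_maps (fun v => rfl) (fun e => ?_)
      rcases e with e1 | b <;> rfl
  | @leaf B' ι' p' h v₀ ih =>
      refine (Refines.leaf ih v₀).congr_maps (fun v => rfl) (fun e => ?_)
      rcases e with e1 | u <;> rfl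
  | @iso B' ι' p' h B'' ψ' ih =>
      exact (Refines.iso ih ψ').congr_maps (fun v => rfl) (fun e => rfl)

lemma refine_partI {G T T' : MGraph} {ιT : T.V → T'.V} {pT : T'.E → Option T.E}
    (h : Refines T T' ιT pT) :
    ∀ (φ : FinHarm G T), T.Loopless →
      ∃ (G' : MGraph) (ιG : G.V → G'.V) (pG : G'.E → Option G.E),
        Refines G G' ιG pG ∧
        ∃ φ' : FinHarm G' T', IsMorRefinement φ φ' ιG pG ιT pT ∧
          ∀ d : ℕ, φ.IsDegree d → φ'.IsDegree d := by
  induction h with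
  | refl =>
      intro φ _
      exact ⟨G, id, (fun e => some e), Refines.refl G, φ, IsMorRefinement.refl φ,
        fun d hd => hd⟩
  | @subdiv T₁ ι₁ p₁ h e₀ ih =>
      intro φ hTl
      obtain ⟨G₁, ιG, pG, RG, φ₁, hmor, hdeg⟩ := ih φ hTl
      have hT₁l : T₁.Loopless := h.loopless hTl
      have Rcomp := RG.trans (G₁.refines_subdivideFinset (subFiber φ₁ e₀))
      have hcomp := hmor.comp (φ₁.subdivStep_isMorRef e₀ hT₁l)
      refine ⟨_, _, _, Rcomp, φ₁.subdivStep e₀ hT₁l,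
        hcomp.congr_maps (fun v => rfl) (fun e => rfl) (fun v => rfl) (fun t => ?_),
        fun d hd => φ₁.subdivStep_isDegree e₀ hT₁l (hdeg d hd)⟩
      rcases t with t1 | b <;> rfl
  | @leaf T₁ ι₁ p₁ h v₀ ih =>
      intro φ hTl
      obtain ⟨G₁, ιG, pG, RG, φ₁, hmor, hdeg⟩ := ih φ hTl
      have Rcomp := RG.trans (G₁.refines_addLeafFinset (leafFiber φ₁ v₀))
      have hcomp := hmor.comp (φ₁.leafStep_isMorRef v₀)
      refine ⟨_, _, _, Rcomp, φ₁.leafStep v₀,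
        hcomp.congr_maps (fun v => rfl) (fun e => rfl) (fun v => rfl) (fun t => ?_),
        fun d hd => φ₁.leafStep_isDegree v₀ (hdeg d hd)⟩
      rcases t with t | u <;> rfl
  | @iso T₁ ι₁ p₁ h T₂ ψ ih =>
      intro φ hTl
      obtain ⟨G₁, ιG, pG, RG, φ₁, hmor, hdeg⟩ := ih φ hTl
      have hcomp := hmor.comp (φ₁.ofIsoTarget_isMorRef ψ)
      exact ⟨G₁, ιG, pG, RG, φ₁.ofIsoTarget ψ,
        hcomp.congr_maps (fun v => rfl) (fun e => rfl) (fun v => rfl) (fun t => rfl),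
        fun d hd => FinHarm.ofIsoTarget_isDegree (hdeg d hd)⟩

lemma refine_partII {G T H : MGraph} {ιH : G.V → H.V} {pH : H.E → Option G.E}
    (h : Refines G H ιH pH) :
    ∀ (φ : FinHarm G T), T.IsTree →
      ∃ (G' T' : MGraph) (ιG : G.V → G'.V) (pG : G'.E → Option G.E)
        (ιT : T.V → T'.V) (pT : T'.E → Option T.E)
        (ι₂ : H.V → G'.V) (p₂ : G'.E → Option H.E),
        Refines G G' ιG pG ∧ Refines T T' ιT pT ∧ Refines H G' ι₂ p₂ ∧
        (∀ v : G.V, ιG v = ι₂ (ιH v)) ∧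
        ∃ φ' : FinHarm G' T', IsMorRefinement φ φ' ιG pG ιT pT ∧
          ∀ d : ℕ, φ.IsDegree d → φ'.IsDegree d := by
  induction h with
  | refl =>
      intro φ hT
      exact ⟨G, T, id, (fun e => some e), id, (fun e => some e), id, (fun e => some e),
        Refines.refl G, Refines.refl T, Refines.refl G, fun v => rfl, φ,
        IsMorRefinement.refl φ, fun d hd => hd⟩
  | @subdiv H₁ ι₁ p₁ h ehat ih =>
      intro φ hT
      obtain ⟨G₁, T₁, ιG, pG, ιT, pT, ι₂, p₂, RG, RT, RH, hcompat, φ₁, hmor, hdeg⟩ :=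
        ih φ hT
      have hT₁l : T₁.Loopless := (RT.isTree hT).loopless
      obtain ⟨eh, heh⟩ := RH.exists_preimage ehat
      have hmemE : eh ∈ subFiber φ₁ (φ₁.fE eh) := (mem_subFiber φ₁ _).mpr rfl
      obtain ⟨ιc, pc, Rc, hιc⟩ := RH.subdivCommute eh ehat heh
      obtain ⟨ιm, pm, Rm, hιm⟩ := G₁.refines_subdivide_mem (subFiber φ₁ (φ₁.fE eh)) hmemE
      have Rcomp := RG.trans (G₁.refines_subdivideFinset (subFiber φ₁ (φ₁.fE eh)))
      have RT2 := Refines.subdiv RT (φ₁.fE eh)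
      have RH2 := Rc.trans Rm
      have hcomp := hmor.comp (φ₁.subdivStep_isMorRef (φ₁.fE eh) hT₁l)
      refine ⟨_, _, _, _, _, _, _, _, Rcomp, RT2, RH2, fun v => ?_,
        φ₁.subdivStep (φ₁.fE eh) hT₁l,
        hcomp.congr_maps (fun v => rfl) (fun e => rfl) (fun v => rfl) (fun t => ?_),
        fun d hd => φ₁.subdivStep_isDegree _ hT₁l (hdeg d hd)⟩
      · show Sum.inl (ιG v) = ιm (ιc (Sum.inl (ι₁ v)))
        rw [hιc, hιm, hcompat v]
      · rcases t with t1 | b <;> rfl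
  | @leaf H₁ ι₁ p₁ h vhat ih =>
      intro φ hT
      obtain ⟨G₁, T₁, ιG, pG, ιT, pT, ι₂, p₂, RG, RT, RH, hcompat, φ₁, hmor, hdeg⟩ :=
        ih φ hT
      have hmemV : ι₂ vhat ∈ leafFiber φ₁ (φ₁.fV (ι₂ vhat)) := (mem_leafFiber φ₁ _).mpr rfl
      obtain ⟨ιc, pc, Rc, hιc⟩ := RH.leafCommute vhat
      obtain ⟨ιm, pm, Rm, hιm⟩ :=
        G₁.refines_addLeaf_mem (leafFiber φ₁ (φ₁.fV (ι₂ vhat))) hmemV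
      have Rcomp := RG.trans (G₁.refines_addLeafFinset (leafFiber φ₁ (φ₁.fV (ι₂ vhat))))
      have RT2 := Refines.leaf RT (φ₁.fV (ι₂ vhat))
      have RH2 := Rc.trans Rm
      have hcomp := hmor.comp (φ₁.leafStep_isMorRef (φ₁.fV (ι₂ vhat)))
      refine ⟨_, _, _, _, _, _, _, _, Rcomp, RT2, RH2, fun v => ?_,
        φ₁.leafStep (φ₁.fV (ι₂ vhat)),
        hcomp.congr_maps (fun v => rfl) (fun e => rfl) (fun v => rfl) (fun t => ?_),
        fun d hd => φ₁.leafStep_isDegree _ (hdeg d hd)⟩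
      · show Sum.inl (ιG v) = ιm (ιc (Sum.inl (ι₁ v)))
        rw [hιc, hιm, hcompat v]
      · rcases t with t | u <;> rfl
  | @iso H₁ ι₁ p₁ h H₂ ψ ih =>
      intro φ hT
      obtain ⟨G₁, T₁, ιG, pG, ιT, pT, ι₂, p₂, RG, RT, RH, hcompat, φ₁, hmor, hdeg⟩ :=
        ih φ hT
      refine ⟨G₁, T₁, ιG, pG, ιT, pT, _, _, RG, RT, Refines.isoPre ψ RH, fun v => ?_,
        φ₁, hmor, hdeg⟩
      show ιG v = ι₂ (ψ.eV.symm (ψ.eV (ι₁ v)))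
      rw [Equiv.symm_apply_apply]
      exact hcompat v

end MainLemmas

end MGraph

/-- Lemma on refining finite harmonic morphisms: given a
finite harmonic morphism `φ : G → T` to a tree, (i) every refinement `T'` of
`T` is the target of some refinement `φ' : G' → T'` of `φ`; (ii) for every
refinement `H` of `G` there is a refinement `φ' : G' → T'` of `φ` with `G'` a
refinement of `H`.  In both cases `deg φ' = deg φ`. -/
theorem refine_harmonic_morphism (G T : MGraph) (hGc : G.Connected)
    (hGl : G.Loopless) (hT : T.IsTree) (φ : FinHarm G T) :
    (∀ (T' : MGraph) (ιT : T.V → T'.V) (pT : T'.E → Option T.E),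
        Refines T T' ιT pT →
        ∃ (G' : MGraph) (ιG : G.V → G'.V) (pG : G'.E → Option G.E),
          Refines G G' ιG pG ∧ G'.Loopless ∧
          ∃ φ' : FinHarm G' T', IsMorRefinement φ φ' ιG pG ιT pT ∧
            ∀ d : ℕ, φ.IsDegree d → φ'.IsDegree d) ∧
    (∀ (H : MGraph) (ιH : G.V → H.V) (pH : H.E → Option G.E),
        Refines G H ιH pH →
        ∃ (G' T' : MGraph) (ιG : G.V → G'.V) (pG : G'.E → Option G.E)
          (ιT : T.V → T'.V) (pT : T'.E → Option T.E)
          (ι₂ : H.V → G'.V) (p₂ : G'.E → Option H.E),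
          Refines G G' ιG pG ∧ Refines T T' ιT pT ∧ Refines H G' ι₂ p₂ ∧
          (∀ v : G.V, ιG v = ι₂ (ιH v)) ∧ G'.Loopless ∧ T'.IsTree ∧
          ∃ φ' : FinHarm G' T', IsMorRefinement φ φ' ιG pG ιT pT ∧
            ∀ d : ℕ, φ.IsDegree d → φ'.IsDegree d) := by
  constructor
  · intro T' ιT pT h
    obtain ⟨G', ιG, pG, RG, φ', hmor, hdeg⟩ := refine_partI h φ hT.loopless
    exact ⟨G', ιG, pG, RG, RG.loopless hGl, φ', hmor, hdeg⟩
  · intro H ιH pH h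
    obtain ⟨G', T', ιG, pG, ιT, pT, ι₂, p₂, RG, RT, RH, hcompat, φ', hmor, hdeg⟩ :=
      refine_partII h φ hT
    exact ⟨G', T', ιG, pG, ιT, pT, ι₂, p₂, RG, RT, RH, hcompat, RG.loopless hGl,
      RT.isTree hT, φ', hmor, hdeg⟩
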